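/- arXiv:2409.16407 — 6 statements merged into one kernel-verified Lean document; each statement's English description precedes it below -/
import Mathlib

section
/- If Q ≪ P_X, then the pushforward Q∘φ⁻¹ is absolutely continuous with respect to P_X∘φ⁻¹, and the Radon–Nikodym derivative satisfies (d(Q∘φ⁻¹)/d(P_X∘φ⁻¹))(φ(X)) = E_P[ w*(X) | σ(φ∘X) ] P-almost surely. -/
open MeasureTheory ProbabilityTheory ENNReal

noncomputable section

/-- If `Q ≪ P_X`, then the pushforward `Q∘φ⁻¹` is absolutely continuous w.r.t.
`P_X∘φ⁻¹`, and `(d(Q∘φ⁻¹)/d(P_X∘φ⁻¹))(φ(X)) = E_P[w*(X) | σ(φ∘X)]` `P`-a.s. -/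
theorem pushforward_absolutelyContinuous_and_rnDeriv_eq_condexp
    {Ω 𝒳 Z : Type*} [MeasurableSpace Ω] [MeasurableSpace 𝒳] [MeasurableSpace Z]
    (P : Measure Ω) [IsProbabilityMeasure P]
    (X : Ω → 𝒳) (hX : Measurable X)
    (φ : 𝒳 → Z) (hφ : Measurable φ)
    (Q : Measure 𝒳) [IsProbabilityMeasure Q]
    (wstar : 𝒳 → ℝ) (hwstar_meas : Measurable wstar)
    (hwstar_nn : 0 ≤ᵐ[P.map X] wstar)
    (hQ : Q = (P.map X).withDensity fun x => ENNReal.ofReal (wstar x)) :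
    Measure.map φ Q ≪ Measure.map φ (P.map X) ∧
    (fun ω => ((Measure.map φ Q).rnDeriv (Measure.map φ (P.map X)) (φ (X ω))).toReal)
      =ᵐ[P]
      P[(fun ω => wstar (X ω)) |
        MeasurableSpace.comap (fun ω' => φ (X ω')) inferInstance] := by
  set μ := P.map X with hμdef
  haveI hμprob : IsProbabilityMeasure μ := Measure.isProbabilityMeasure_map hX.aemeasurable
  have hQμ : Q ≪ μ := hQ ▸ withDensity_absolutelyContinuous _ _
  have hac : Measure.map φ Q ≪ Measure.map φ μ := hQμ.map hφ
  refine ⟨hac, ?_⟩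
  haveI : IsProbabilityMeasure (Measure.map φ Q) := Measure.isProbabilityMeasure_map hφ.aemeasurable
  haveI : IsProbabilityMeasure (Measure.map φ μ) := Measure.isProbabilityMeasure_map hφ.aemeasurable
  have hm : MeasurableSpace.comap (fun ω' => φ (X ω')) inferInstance ≤ ‹MeasurableSpace Ω› :=
    measurable_iff_comap_le.mp (hφ.comp hX)
  haveI : SigmaFinite (P.trim hm) := inferInstance
  -- integrability of wstar
  have hw_int : Integrable wstar μ := by
    refine ⟨hwstar_meas.aestronglyMeasurable, ?_⟩
    have h1 : ∫⁻ x, (‖wstar x‖₊ : ℝ≥0∞) ∂μ = ∫⁻ x, ENNReal.ofReal (wstar x) ∂μ :=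
      lintegral_congr_ae (hwstar_nn.mono fun x hx => Real.enorm_eq_ofReal hx)
    show ∫⁻ x, (‖wstar x‖₊ : ℝ≥0∞) ∂μ < ⊤
    rw [h1, ← setLIntegral_univ, ← withDensity_apply _ MeasurableSet.univ, ← hQ]
    exact measure_lt_top Q _
  have hf : Integrable (fun ω => wstar (X ω)) P :=
    (integrable_map_measure hwstar_meas.aestronglyMeasurable hX.aemeasurable).mp hw_int
  -- the density function on Z
  set r : Z → ℝ := fun z => ((Measure.map φ Q).rnDeriv (Measure.map φ μ) z).toReal with hrdef
  have hr_meas : Measurable r := (Measure.measurable_rnDeriv _ _).ennreal_toReal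
  have hmapmap : μ.map φ = P.map (fun ω => φ (X ω)) := Measure.map_map hφ hX
  have hr_int : Integrable r (Measure.map φ μ) := Measure.integrable_toReal_rnDeriv
  have hg_int : Integrable (fun ω => r (φ (X ω))) P := by
    rw [← Function.comp_def]
    exact (integrable_map_measure hr_meas.aestronglyMeasurable
      ((hφ.comp hX).aemeasurable)).mp (hmapmap ▸ hr_int)
  refine ae_eq_condExp_of_forall_setIntegral_eq hm hf
    (fun s _ _ => hg_int.integrableOn) ?_ ?_
  · rintro s ⟨t, ht, rfl⟩ _
    have hLHS : ∫ ω in (fun ω' => φ (X ω')) ⁻¹' t, r (φ (X ω)) ∂P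
        = ((Measure.map φ Q) t).toReal := by
      rw [← setIntegral_map (g := fun ω => φ (X ω)) ht hr_meas.aestronglyMeasurable
          (hφ.comp hX).aemeasurable,
        ← hmapmap, Measure.setIntegral_toReal_rnDeriv hac t, measureReal_def]
    have hpre : (fun ω' => φ (X ω')) ⁻¹' t = X ⁻¹' (φ ⁻¹' t) := rfl
    have hRHS : ∫ ω in (fun ω' => φ (X ω')) ⁻¹' t, wstar (X ω) ∂P
        = ((Measure.map φ Q) t).toReal := by
      rw [hpre, ← setIntegral_map (hφ ht) hwstar_meas.aestronglyMeasurable hX.aemeasurable,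
        integral_eq_lintegral_of_nonneg_ae (ae_restrict_of_ae hwstar_nn)
          hwstar_meas.aestronglyMeasurable.restrict,
        ← withDensity_apply _ (hφ ht), ← hQ, Measure.map_apply hφ ht]
    rw [hLHS, hRHS]
  · exact StronglyMeasurable.aestronglyMeasurable
      ((hr_meas.comp (measurable_iff_comap_le.mpr le_rfl)).stronglyMeasurable)

end
end

section
/- The confounding bias of φ satisfies E_Q[m_φ∘φ − m] = E_P[ ( m_φ(φ(X)) − m(X) ) · ( w*(X) − w*_φ(φ(X)) ) ], where w*_φ = d(Q∘φ⁻¹)/d(P_X∘φ⁻¹). -/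
open MeasureTheory ProbabilityTheory ENNReal

noncomputable section

private lemma memLp_condexp_two {α : Type*} {m m0 : MeasurableSpace α} (hm : m ≤ m0)
    {μ : Measure α} [IsFiniteMeasure μ] {g : α → ℝ} (hg : MemLp g 2 μ) :
    MemLp (μ[g|m]) 2 μ := by
  have heq : (condExpL2 ℝ ℝ hm (hg.toLp g) : α → ℝ) =ᵐ[μ] μ[g|m] := by
    refine ae_eq_condExp_of_forall_setIntegral_eq hm (hg.integrable one_le_two)
      (fun s _ hμs => integrableOn_condExpL2_of_measure_ne_top hm hμs.ne _)
      (fun s hs hμs => ?_) (aestronglyMeasurable_condExpL2 hm _)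
    rw [integral_condExpL2_eq hm _ hs hμs.ne]
    exact setIntegral_congr_ae (hm s hs) (hg.coeFn_toLp.mono fun x hx _ => hx)
  exact (Lp.memLp ((condExpL2 ℝ ℝ hm (hg.toLp g) : Lp ℝ 2 μ))).ae_eq heq

private lemma integrable_mul_of_memLp_two {α : Type*} {m0 : MeasurableSpace α} {μ : Measure α}
    {f g : α → ℝ} (hf : MemLp f 2 μ) (hg : MemLp g 2 μ) :
    Integrable (fun x => f x * g x) μ := by
  have h := hg.smul (φ := f) hf (p := 2) (q := 2) (r := 1)
    (hpqr := ⟨by rw [ENNReal.inv_two_add_inv_two, inv_one]⟩)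
  rw [← memLp_one_iff_integrable]
  exact h

/-- The confounding bias of the representation `φ` satisfies
`E_Q[m_φ∘φ − m] = E_P[(m_φ(φ(X)) − m(X))·(w*(X) − w*_φ(φ(X)))]`,
where `w*_φ = d(Q∘φ⁻¹)/d(P_X∘φ⁻¹)`. -/
theorem confounding_bias_eq_cov
    {Ω 𝒳 Z : Type*} [MeasurableSpace Ω] [MeasurableSpace 𝒳] [MeasurableSpace Z]
    (P : Measure Ω) [IsProbabilityMeasure P]
    (X : Ω → 𝒳) (hX : Measurable X)
    (φ : 𝒳 → Z) (hφ : Measurable φ)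
    (Q : Measure 𝒳) [IsProbabilityMeasure Q]
    (wstar : 𝒳 → ℝ) (hwstar_meas : Measurable wstar)
    (hwstar_nn : 0 ≤ᵐ[P.map X] wstar)
    (hQ : Q = (P.map X).withDensity fun x => ENNReal.ofReal (wstar x))
    (hwstarL2 : MemLp (fun ω => wstar (X ω)) 2 P)
    (Y : Ω → ℝ) (hY : MemLp Y 2 P)
    (m : 𝒳 → ℝ) (hm_meas : Measurable m)
    (hm : (fun ω => m (X ω)) =ᵐ[P] P[Y | MeasurableSpace.comap X inferInstance])
    (mφ : Z → ℝ) (hmφ_meas : Measurable mφ)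
    (hmφ : (fun ω => mφ (φ (X ω))) =ᵐ[P]
      P[Y | MeasurableSpace.comap (fun ω' => φ (X ω')) inferInstance]) :
    ∫ x, (mφ (φ x) - m x) ∂Q
      = ∫ ω, (mφ (φ (X ω)) - m (X ω)) *
          (wstar (X ω)
            - ((Measure.map φ Q).rnDeriv (Measure.map φ (P.map X)) (φ (X ω))).toReal) ∂P := by
  have hXm : AEMeasurable X P := hX.aemeasurable
  have hgm : AEMeasurable (fun ω' => φ (X ω')) P := (hφ.comp hX).aemeasurable
  haveI : IsProbabilityMeasure (P.map X) := Measure.isProbabilityMeasure_map hXm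
  haveI : IsProbabilityMeasure ((P.map X).map φ) := Measure.isProbabilityMeasure_map hφ.aemeasurable
  haveI : IsProbabilityMeasure (Q.map φ) := Measure.isProbabilityMeasure_map hφ.aemeasurable
  have hF := hX.comap_le
  have hG : MeasurableSpace.comap (fun ω' => φ (X ω')) inferInstance
      ≤ (inferInstance : MeasurableSpace Ω) := (hφ.comp hX).comap_le
  have hGF : MeasurableSpace.comap (fun ω' => φ (X ω')) inferInstance
      ≤ MeasurableSpace.comap X inferInstance := by
    rw [show (fun ω' => φ (X ω')) = φ ∘ X from rfl, ← MeasurableSpace.comap_comp]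
    exact MeasurableSpace.comap_mono hφ.comap_le
  have hwφ_meas : Measurable (fun z => ((Q.map φ).rnDeriv ((P.map X).map φ) z).toReal) :=
    (Measure.measurable_rnDeriv _ _).ennreal_toReal
  have hQμ : Q ≪ P.map X := by rw [hQ]; exact withDensity_absolutelyContinuous _ _
  have hQν : Q.map φ ≪ (P.map X).map φ := hQμ.map hφ
  have hμφν : P.map (fun ω => φ (X ω)) = (P.map X).map φ := by
    rw [Measure.map_map hφ hX]; rfl
  -- Q of a measurable set as an integral of wstar
  have hQapp : ∀ A : Set 𝒳, MeasurableSet A →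
      ∫ x in A, wstar x ∂(P.map X) = (Q A).toReal := by
    intro A hA
    rw [hQ, withDensity_apply _ hA,
      integral_eq_lintegral_of_nonneg_ae (ae_restrict_of_ae hwstar_nn)
        hwstar_meas.aestronglyMeasurable.restrict]
  -- W is G-measurable
  have hWmeasG : Measurable[MeasurableSpace.comap (fun ω' => φ (X ω')) inferInstance]
      (fun ω => ((Q.map φ).rnDeriv ((P.map X).map φ) (φ (X ω))).toReal) := by
    have h1 : Measurable[MeasurableSpace.comap (fun ω' => φ (X ω')) inferInstance]
        (fun ω' => φ (X ω')) := measurable_iff_comap_le.mpr le_rfl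
    exact hwφ_meas.comp h1
  -- W is integrable
  have hWint : Integrable (fun ω => ((Q.map φ).rnDeriv ((P.map X).map φ) (φ (X ω))).toReal) P := by
    have h1 : Integrable (fun z => ((Q.map φ).rnDeriv ((P.map X).map φ) z).toReal)
        (P.map (fun ω' => φ (X ω'))) := by
      rw [hμφν]; exact Measure.integrable_toReal_rnDeriv
    exact (integrable_map_measure hwφ_meas.aestronglyMeasurable hgm).mp h1
  -- W is a conditional expectation of wstar ∘ X
  have hWcond : (fun ω => ((Q.map φ).rnDeriv ((P.map X).map φ) (φ (X ω))).toReal) =ᵐ[P]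
      P[(fun ω => wstar (X ω))|MeasurableSpace.comap (fun ω' => φ (X ω')) inferInstance] := by
    refine ae_eq_condExp_of_forall_setIntegral_eq hG (hwstarL2.integrable one_le_two)
      (fun s _ _ => hWint.integrableOn) (fun s hs _ => ?_)
      hWmeasG.stronglyMeasurable.aestronglyMeasurable
    obtain ⟨t, ht, rfl⟩ := hs
    have h1 : ∫ ω in (fun ω' => φ (X ω')) ⁻¹' t,
        ((Q.map φ).rnDeriv ((P.map X).map φ) (φ (X ω))).toReal ∂P = ((Q.map φ) t).toReal := by
      rw [← setIntegral_map (g := fun ω' => φ (X ω')) ht hwφ_meas.aestronglyMeasurable hgm,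
        hμφν, Measure.setIntegral_toReal_rnDeriv hQν t, measureReal_def]
    have h2 : ∫ ω in (fun ω' => φ (X ω')) ⁻¹' t, wstar (X ω) ∂P = ((Q.map φ) t).toReal := by
      have hpre : (fun ω' => φ (X ω')) ⁻¹' t = X ⁻¹' (φ ⁻¹' t) := rfl
      rw [hpre, ← setIntegral_map (g := X) (hφ ht) hwstar_meas.aestronglyMeasurable hXm,
        hQapp _ (hφ ht), Measure.map_apply hφ ht]
    rw [h1, h2]
  have hW2 : MemLp (fun ω => ((Q.map φ).rnDeriv ((P.map X).map φ) (φ (X ω))).toReal) 2 P :=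
    (memLp_condexp_two hG hwstarL2).ae_eq hWcond.symm
  have ha2 : MemLp (fun ω => m (X ω)) 2 P := (memLp_condexp_two hF hY).ae_eq hm.symm
  have hb2 : MemLp (fun ω => mφ (φ (X ω))) 2 P := (memLp_condexp_two hG hY).ae_eq hmφ.symm
  have hf2 : MemLp (fun ω => mφ (φ (X ω)) - m (X ω)) 2 P := hb2.sub ha2
  -- tower property
  have hmG : P[(fun ω => m (X ω))|MeasurableSpace.comap (fun ω' => φ (X ω')) inferInstance]
      =ᵐ[P] fun ω => mφ (φ (X ω)) :=
    (condExp_congr_ae hm).trans ((condExp_condExp_of_le hGF hF).trans hmφ.symm)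
  -- the orthogonality / zero term
  have hWa : Integrable (fun ω => ((Q.map φ).rnDeriv ((P.map X).map φ) (φ (X ω))).toReal
      * m (X ω)) P := integrable_mul_of_memLp_two hW2 ha2
  have hWb : Integrable (fun ω => ((Q.map φ).rnDeriv ((P.map X).map φ) (φ (X ω))).toReal
      * mφ (φ (X ω))) P := integrable_mul_of_memLp_two hW2 hb2
  have hzero : ∫ ω, (mφ (φ (X ω)) - m (X ω)) *
      ((Q.map φ).rnDeriv ((P.map X).map φ) (φ (X ω))).toReal ∂P = 0 := by
    have h1 : ∫ ω, ((Q.map φ).rnDeriv ((P.map X).map φ) (φ (X ω))).toReal * m (X ω) ∂P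
        = ∫ ω, ((Q.map φ).rnDeriv ((P.map X).map φ) (φ (X ω))).toReal * mφ (φ (X ω)) ∂P := by
      have h3 := condExp_mul_of_stronglyMeasurable_left (μ := P)
        (m := MeasurableSpace.comap (fun ω' => φ (X ω')) inferInstance)
        hWmeasG.stronglyMeasurable
        (g := fun ω => m (X ω))
        (by exact hWa) (ha2.integrable one_le_two)
      have h5 : (fun ω => ((Q.map φ).rnDeriv ((P.map X).map φ) (φ (X ω))).toReal)
          * (fun ω => m (X ω)) = fun ω =>
            ((Q.map φ).rnDeriv ((P.map X).map φ) (φ (X ω))).toReal * m (X ω) := rfl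
      rw [h5] at h3
      calc ∫ ω, ((Q.map φ).rnDeriv ((P.map X).map φ) (φ (X ω))).toReal * m (X ω) ∂P
          = ∫ ω, (MeasureTheory.condExp
              (MeasurableSpace.comap (fun ω' => φ (X ω')) inferInstance) P
              (fun ω => ((Q.map φ).rnDeriv ((P.map X).map φ) (φ (X ω))).toReal * m (X ω))) ω ∂P :=
            (integral_condExp hG).symm
        _ = ∫ ω, ((Q.map φ).rnDeriv ((P.map X).map φ) (φ (X ω))).toReal * mφ (φ (X ω)) ∂P := by
            refine integral_congr_ae (h3.trans ?_)
            filter_upwards [hmG] with ω h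
            simp only [Pi.mul_apply, h]
    have h4 : ∫ ω, (mφ (φ (X ω)) - m (X ω)) *
          ((Q.map φ).rnDeriv ((P.map X).map φ) (φ (X ω))).toReal ∂P
        = ∫ ω, ((Q.map φ).rnDeriv ((P.map X).map φ) (φ (X ω))).toReal * mφ (φ (X ω)) ∂P
          - ∫ ω, ((Q.map φ).rnDeriv ((P.map X).map φ) (φ (X ω))).toReal * m (X ω) ∂P := by
      rw [← integral_sub hWb hWa]
      exact integral_congr_ae (Filter.Eventually.of_forall fun ω => by ring)
    rw [h4, h1, sub_self]
  -- LHS computation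
  have hLHS : ∫ x, (mφ (φ x) - m x) ∂Q
      = ∫ ω, (mφ (φ (X ω)) - m (X ω)) * wstar (X ω) ∂P := by
    rw [hQ]
    rw [show (fun x => ENNReal.ofReal (wstar x)) = fun x => ((wstar x).toNNReal : ℝ≥0∞) from rfl]
    rw [integral_withDensity_eq_integral_smul hwstar_meas.real_toNNReal]
    rw [integral_congr_ae (g := fun x => (mφ (φ x) - m x) * wstar x)
      (by filter_upwards [hwstar_nn] with x hx
          simp [NNReal.smul_def, Real.coe_toNNReal _ hx, mul_comm])]
    exact integral_map hXm (((hmφ_meas.comp hφ).sub hm_meas).mul hwstar_meas).aestronglyMeasurable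
  -- RHS computation
  have hfw : Integrable (fun ω => (mφ (φ (X ω)) - m (X ω)) * wstar (X ω)) P :=
    integrable_mul_of_memLp_two hf2 hwstarL2
  have hfW : Integrable (fun ω => (mφ (φ (X ω)) - m (X ω)) *
      ((Q.map φ).rnDeriv ((P.map X).map φ) (φ (X ω))).toReal) P :=
    integrable_mul_of_memLp_two hf2 hW2
  have hRHS : ∫ ω, (mφ (φ (X ω)) - m (X ω)) * (wstar (X ω)
        - ((Q.map φ).rnDeriv ((P.map X).map φ) (φ (X ω))).toReal) ∂P
      = ∫ ω, (mφ (φ (X ω)) - m (X ω)) * wstar (X ω) ∂P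
        - ∫ ω, (mφ (φ (X ω)) - m (X ω)) *
            ((Q.map φ).rnDeriv ((P.map X).map φ) (φ (X ω))).toReal ∂P := by
    rw [← integral_sub hfw hfW]
    exact integral_congr_ae (Filter.Eventually.of_forall fun ω => by ring)
  rw [hLHS, hRHS, hzero, sub_zero]

end
end

section
/- The absolute value of the confounding bias is bounded by the L² norm of Y times the balancing score error: | E_Q[m_φ∘φ − m] | ≤ ‖m(X)‖_{L²(P)} · BSE(φ) ≤ ‖Y‖_{L²(P)} · BSE(φ). -/
open MeasureTheory ProbabilityTheory ENNReal

noncomputable section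

/-- The balancing score error of a representation `ψ` of the data `W` under `P`:
the `L²(P)` distance between `W` and its conditional expectation given `σ(ψ)`. -/
def bse {Ω Z : Type*} [MeasurableSpace Ω] [MeasurableSpace Z]
    (P : Measure Ω) (W : Ω → ℝ) (ψ : Ω → Z) : ℝ≥0∞ :=
  eLpNorm (fun ω => W ω - (P[W | MeasurableSpace.comap ψ inferInstance]) ω) 2 P

namespace CBaux

variable {α : Type*}

lemma one_eq_half_add_half : (1 : ℝ≥0∞) / 1 = 1 / 2 + 1 / 2 := by
  simp only [one_div, inv_one]
  rw [eq_comm]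
  exact ENNReal.inv_two_add_inv_two

lemma holder_two : ENNReal.HolderTriple 2 2 1 :=
  ⟨by rw [ENNReal.inv_two_add_inv_two, inv_one]⟩

lemma condexp_ae_eq_condexpL2 {m m0 : MeasurableSpace α} {μ : Measure α}
    (hm : m ≤ m0) [IsProbabilityMeasure μ] {f : α → ℝ}
    (hf : MemLp f 2 μ) :
    (condExpL2 ℝ ℝ hm (hf.toLp f) : α → ℝ) =ᵐ[μ] μ[f|m] := by
  refine ae_eq_condExp_of_forall_setIntegral_eq hm (hf.integrable one_le_two)
    (fun s hs hμs => integrableOn_condExpL2_of_measure_ne_top hm hμs.ne _) ?_ ?_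
  · intro s hs hμs
    rw [integral_condExpL2_eq hm (hf.toLp f) hs hμs.ne]
    exact setIntegral_congr_ae (hm s hs) ((MemLp.coeFn_toLp hf).mono fun x hx _ => hx)
  · exact aestronglyMeasurable_condExpL2 hm _

lemma memℒp_two_condexp {m m0 : MeasurableSpace α} {μ : Measure α}
    (hm : m ≤ m0) [IsProbabilityMeasure μ] {f : α → ℝ}
    (hf : MemLp f 2 μ) : MemLp (μ[f|m]) 2 μ :=
  (Lp.memLp ((condExpL2 ℝ ℝ hm (hf.toLp f) : α →₂[μ] ℝ))).ae_eq
    (condexp_ae_eq_condexpL2 hm hf)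

lemma eLpNorm_two_condexp_le {m m0 : MeasurableSpace α} {μ : Measure α}
    (hm : m ≤ m0) [IsProbabilityMeasure μ] {f : α → ℝ}
    (hf : MemLp f 2 μ) : eLpNorm (μ[f|m]) 2 μ ≤ eLpNorm f 2 μ := by
  rw [← eLpNorm_congr_ae (condexp_ae_eq_condexpL2 hm hf)]
  calc eLpNorm ((condExpL2 ℝ ℝ hm (hf.toLp f) : α →₂[μ] ℝ) : α → ℝ) 2 μ
      ≤ eLpNorm (hf.toLp f : α → ℝ) 2 μ := eLpNorm_condExpL2_le hm _
    _ = eLpNorm f 2 μ := eLpNorm_congr_ae (MemLp.coeFn_toLp hf)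

lemma integrable_mul_L2 {m0 : MeasurableSpace α} {μ : Measure α} {f g : α → ℝ}
    (hf : MemLp f 2 μ) (hg : MemLp g 2 μ) :
    Integrable (fun x => g x * f x) μ := by
  have h : MemLp (g • f) 1 μ := MemLp.smul (hpqr := holder_two) hf hg
  exact memLp_one_iff_integrable.mp h

/-- Pull-out identity: for `g` an `m`-strongly-measurable `L²` function and `f ∈ L²`,
`∫ g f = ∫ g E[f|m]`. -/
lemma integral_mul_condexp {m m0 : MeasurableSpace α} {μ : Measure α}
    (hm : m ≤ m0) [IsProbabilityMeasure μ] {f g : α → ℝ}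
    (hg : StronglyMeasurable[m] g) (hgL2 : MemLp g 2 μ) (hf : MemLp f 2 μ) :
    ∫ x, g x * f x ∂μ = ∫ x, g x * (μ[f|m]) x ∂μ := by
  have hgf : Integrable (g * f) μ := integrable_mul_L2 hf hgL2
  have h := condExp_mul_of_stronglyMeasurable_left (μ := μ) hg hgf (hf.integrable one_le_two)
  calc ∫ x, g x * f x ∂μ = ∫ x, (μ[g * f|m]) x ∂μ := (integral_condExp hm).symm
    _ = ∫ x, (g * μ[f|m]) x ∂μ := integral_congr_ae h
    _ = ∫ x, g x * (μ[f|m]) x ∂μ := rfl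

/-- The key abstract bound. -/
lemma key_bound {mZ mX m0 : MeasurableSpace α}
    (hZX : mZ ≤ mX) (hX0 : mX ≤ m0) (μ : @MeasureTheory.Measure α m0)
    [IsProbabilityMeasure μ]
    (W Y g h : α → ℝ) (hW : MemLp W 2 μ) (hY : MemLp Y 2 μ)
    (hg : g =ᵐ[μ] μ[Y|mX]) (hh : h =ᵐ[μ] μ[Y|mZ])
    (hh_sm : StronglyMeasurable[mZ] h) :
    ENNReal.ofReal |∫ ω, (h ω - g ω) * W ω ∂μ|
      ≤ eLpNorm g 2 μ * eLpNorm (fun ω => W ω - (μ[W|mZ]) ω) 2 μ := by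
  have hZ0 : mZ ≤ m0 := hZX.trans hX0
  have hgL2 : MemLp g 2 μ := (memℒp_two_condexp hX0 hY).ae_eq hg.symm
  have hhL2 : MemLp h 2 μ := (memℒp_two_condexp hZ0 hY).ae_eq hh.symm
  have hW'L2 : MemLp (μ[W|mZ]) 2 μ := memℒp_two_condexp hZ0 hW
  have hW'_smZ : StronglyMeasurable[mZ] (μ[W|mZ]) := stronglyMeasurable_condExp
  have hW'_smX : StronglyMeasurable[mX] (μ[W|mZ]) := hW'_smZ.mono hZX
  have hA1 : ∫ ω, h ω * W ω ∂μ = ∫ ω, h ω * (μ[W|mZ]) ω ∂μ :=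
    integral_mul_condexp hZ0 hh_sm hhL2 hW
  have hA2 : ∫ ω, (μ[W|mZ]) ω * Y ω ∂μ = ∫ ω, (μ[W|mZ]) ω * h ω ∂μ := by
    rw [integral_mul_condexp hZ0 hW'_smZ hW'L2 hY]
    refine integral_congr_ae (hh.mono fun ω hω => ?_)
    dsimp only; rw [hω]
  have hA3 : ∫ ω, (μ[W|mZ]) ω * Y ω ∂μ = ∫ ω, (μ[W|mZ]) ω * g ω ∂μ := by
    rw [integral_mul_condexp hX0 hW'_smX hW'L2 hY]
    refine integral_congr_ae (hg.mono fun ω hω => ?_)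
    dsimp only; rw [hω]
  have i1 : Integrable (fun ω => h ω * W ω) μ := integrable_mul_L2 hW hhL2
  have i2 : Integrable (fun ω => g ω * W ω) μ := integrable_mul_L2 hW hgL2
  have i3 : Integrable (fun ω => g ω * (μ[W|mZ]) ω) μ := integrable_mul_L2 hW'L2 hgL2
  have hkey : ∫ ω, (h ω - g ω) * W ω ∂μ
      = ∫ ω, g ω * ((μ[W|mZ]) ω - W ω) ∂μ := by
    have e1 : ∫ ω, (h ω - g ω) * W ω ∂μ
        = ∫ ω, h ω * W ω ∂μ - ∫ ω, g ω * W ω ∂μ := by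
      simp_rw [sub_mul]
      exact integral_sub i1 i2
    have e2 : ∫ ω, g ω * ((μ[W|mZ]) ω - W ω) ∂μ
        = ∫ ω, g ω * (μ[W|mZ]) ω ∂μ - ∫ ω, g ω * W ω ∂μ := by
      simp_rw [mul_sub]
      exact integral_sub i3 i2
    rw [e1, e2, hA1]
    have hc : ∫ ω, h ω * (μ[W|mZ]) ω ∂μ = ∫ ω, g ω * (μ[W|mZ]) ω ∂μ := by
      have c1 : ∫ ω, h ω * (μ[W|mZ]) ω ∂μ = ∫ ω, (μ[W|mZ]) ω * h ω ∂μ := by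
        simp_rw [mul_comm]
      have c2 : ∫ ω, g ω * (μ[W|mZ]) ω ∂μ = ∫ ω, (μ[W|mZ]) ω * g ω ∂μ := by
        simp_rw [mul_comm]
      rw [c1, c2, ← hA2, hA3]
    rw [hc]
  rw [hkey]
  -- Cauchy-Schwarz
  have hint : Integrable (fun ω => g ω * ((μ[W|mZ]) ω - W ω)) μ :=
    integrable_mul_L2 (hW'L2.sub hW) hgL2
  have h1 : ENNReal.ofReal |∫ ω, g ω * ((μ[W|mZ]) ω - W ω) ∂μ|
      ≤ eLpNorm (fun ω => g ω * ((μ[W|mZ]) ω - W ω)) 1 μ := by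
    rw [eLpNorm_one_eq_lintegral_enorm, ← ofReal_integral_norm_eq_lintegral_enorm hint]
    refine ENNReal.ofReal_le_ofReal ?_
    calc |∫ ω, g ω * ((μ[W|mZ]) ω - W ω) ∂μ|
        = ‖∫ ω, g ω * ((μ[W|mZ]) ω - W ω) ∂μ‖ := rfl
      _ ≤ ∫ ω, ‖g ω * ((μ[W|mZ]) ω - W ω)‖ ∂μ := norm_integral_le_integral_norm _
  refine h1.trans ?_
  have h2 : eLpNorm (fun ω => g ω * ((μ[W|mZ]) ω - W ω)) 1 μ
      ≤ eLpNorm g 2 μ * eLpNorm (fun ω => (μ[W|mZ]) ω - W ω) 2 μ :=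
    by have h := eLpNorm_le_eLpNorm_mul_eLpNorm'_of_norm (hpqr := holder_two)
          hgL2.aestronglyMeasurable
          ((hW'L2.sub hW).aestronglyMeasurable) (fun a b : ℝ => a * b) 1
          (Filter.Eventually.of_forall fun x => by rw [norm_mul]; simp)
       simp only [ENNReal.coe_one, one_mul] at h
       exact h
  refine h2.trans (le_of_eq ?_)
  congr 1
  exact eLpNorm_sub_comm (μ[W|mZ]) W 2 μ

end CBaux

/-- The absolute confounding bias is bounded by `‖m(X)‖_{L²(P)}·BSE(φ)`, which is
itself bounded by `‖Y‖_{L²(P)}·BSE(φ)`. -/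
theorem abs_confounding_bias_le_norm_mul_bse
    {Ω 𝒳 Z : Type*} [MeasurableSpace Ω] [MeasurableSpace 𝒳] [MeasurableSpace Z]
    (P : Measure Ω) [IsProbabilityMeasure P]
    (X : Ω → 𝒳) (hX : Measurable X)
    (φ : 𝒳 → Z) (hφ : Measurable φ)
    (Q : Measure 𝒳) [IsProbabilityMeasure Q]
    (wstar : 𝒳 → ℝ) (hwstar_meas : Measurable wstar)
    (hwstar_nn : 0 ≤ᵐ[P.map X] wstar)
    (hQ : Q = (P.map X).withDensity fun x => ENNReal.ofReal (wstar x))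
    (hwstarL2 : MemLp (fun ω => wstar (X ω)) 2 P)
    (Y : Ω → ℝ) (hY : MemLp Y 2 P)
    (m : 𝒳 → ℝ) (hm_meas : Measurable m)
    (hm : (fun ω => m (X ω)) =ᵐ[P] P[Y | MeasurableSpace.comap X inferInstance])
    (mφ : Z → ℝ) (hmφ_meas : Measurable mφ)
    (hmφ : (fun ω => mφ (φ (X ω))) =ᵐ[P]
      P[Y | MeasurableSpace.comap (fun ω' => φ (X ω')) inferInstance]) :
    ENNReal.ofReal |∫ x, (mφ (φ x) - m x) ∂Q|
        ≤ eLpNorm (fun ω => m (X ω)) 2 P *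
          bse P (fun ω => wstar (X ω)) (fun ω => φ (X ω)) ∧
    eLpNorm (fun ω => m (X ω)) 2 P *
          bse P (fun ω => wstar (X ω)) (fun ω => φ (X ω))
        ≤ eLpNorm Y 2 P *
          bse P (fun ω => wstar (X ω)) (fun ω => φ (X ω)) := by
  classical
  have hmX_le : MeasurableSpace.comap X inferInstance ≤ (inferInstance : MeasurableSpace Ω) :=
    hX.comap_le
  have hmZ_le_mX : MeasurableSpace.comap (fun ω' => φ (X ω')) inferInstance
      ≤ MeasurableSpace.comap X inferInstance := by
    have h := MeasurableSpace.comap_mono (g := X) hφ.comap_le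
    rw [MeasurableSpace.comap_comp] at h
    exact h
  have hψ_meas : Measurable[MeasurableSpace.comap (fun ω' => φ (X ω')) inferInstance]
      (fun ω => φ (X ω)) := Measurable.of_comap_le le_rfl
  have hmφψ_sm : StronglyMeasurable[MeasurableSpace.comap (fun ω' => φ (X ω')) inferInstance]
      (fun ω => mφ (φ (X ω))) :=
    Measurable.stronglyMeasurable (Measurable.comp hmφ_meas hψ_meas)
  -- Step 1: rewrite the bias integral over P
  have hQint : ∫ x, (mφ (φ x) - m x) ∂Q
      = ∫ ω, (mφ (φ (X ω)) - m (X ω)) * (fun ω => wstar (X ω)) ω ∂P := by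
    rw [hQ]
    have h1 : ((P.map X).withDensity fun x => ENNReal.ofReal (wstar x))
        = (P.map X).withDensity fun x => ((wstar x).toNNReal : ℝ≥0∞) := by
      simp [ENNReal.ofReal]
    rw [h1, integral_withDensity_eq_integral_smul
        (hwstar_meas.real_toNNReal) (fun x => mφ (φ x) - m x)]
    have h2 : ∫ x, (wstar x).toNNReal • (mφ (φ x) - m x) ∂(P.map X)
        = ∫ x, (mφ (φ x) - m x) * wstar x ∂(P.map X) := by
      refine integral_congr_ae ?_
      filter_upwards [hwstar_nn] with x hx
      simp [NNReal.smul_def, Real.coe_toNNReal _ hx, mul_comm]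
    rw [h2, integral_map hX.aemeasurable]
    exact (((hmφ_meas.comp hφ).sub hm_meas).mul hwstar_meas).aestronglyMeasurable
  have hmain := CBaux.key_bound hmZ_le_mX hmX_le P
    (fun ω => wstar (X ω)) Y (fun ω => m (X ω)) (fun ω => mφ (φ (X ω)))
    hwstarL2 hY hm hmφ hmφψ_sm
  constructor
  · rw [hQint]
    exact hmain
  · refine mul_le_mul_left ?_ _
    rw [eLpNorm_congr_ae hm]
    exact CBaux.eLpNorm_two_condexp_le hmX_le hY

end
end

section
/- Let M be a set of functions in L²(P_X) with m ∈ M, and for each m' ∈ M fix a measurable m'_φ : Z → ℝ such that m'_φ(φ(X)) is a version of E[m'(X)|σ(φ∘X)]; let φ(M,P) denote the collection of these functions m'_φ. Then for any weight function w w.r.t. P with w ∈ L²(P_X) that equals a measurable function of φ P_X-almost surely, the bias Bias(w) = ∫ w·m dP_X − ∫ m dQ satisfies |Bias(w)| ≤ IPM_{φ(M,P)}( (P_X^w)∘φ⁻¹, Q∘φ⁻¹ ) + ‖Y‖_{L²(P)} · BSE(φ), where P_X^w is the measure with density w w.r.t. P_X and IPM_G(μ,ν) = sup_{g∈G}|∫g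 dμ − ∫g dν|. -/
open MeasureTheory ProbabilityTheory ENNReal

noncomputable section

/-- Integral probability metric over a class of functions `G`, valued in `ℝ≥0∞`. -/
def ipmE {α : Type*} [MeasurableSpace α] (G : Set (α → ℝ)) (μ ν : Measure α) : ℝ≥0∞ :=
  ⨆ g ∈ G, ENNReal.ofReal |(∫ x, g x ∂μ) - ∫ x, g x ∂ν|

section Aux

variable {α : Type*} {m m0 : MeasurableSpace α} {μ : Measure α}

lemma aux_integrable_mul {u f : α → ℝ} (hu : MemLp u 2 μ) (hf : MemLp f 2 μ) :
    Integrable (fun x => u x * f x) μ := by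
  have hsm : u • f = fun x => u x * f x := by ext x; simp [smul_eq_mul]
  have h : eLpNorm (u • f) 1 μ ≤ eLpNorm u 2 μ * eLpNorm f 2 μ :=
    eLpNorm_smul_le_mul_eLpNorm hf.1 hu.1
      (hpqr := ⟨by simp only [one_div, inv_one]; exact ENNReal.inv_two_add_inv_two⟩)
  rw [hsm] at h
  exact memLp_one_iff_integrable.mp ⟨hu.1.mul hf.1,
    lt_of_le_of_lt h (ENNReal.mul_lt_top hu.2 hf.2)⟩

lemma aux_ofReal_abs_integral_mul_le {u f : α → ℝ} (hu : MemLp u 2 μ) (hf : MemLp f 2 μ) :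
    ENNReal.ofReal |∫ x, u x * f x ∂μ| ≤ eLpNorm u 2 μ * eLpNorm f 2 μ := by
  have hi : Integrable (fun x => u x * f x) μ := aux_integrable_mul hu hf
  have hsm : u • f = fun x => u x * f x := by ext x; simp [smul_eq_mul]
  have h : eLpNorm (u • f) 1 μ ≤ eLpNorm u 2 μ * eLpNorm f 2 μ :=
    eLpNorm_smul_le_mul_eLpNorm hf.1 hu.1
      (hpqr := ⟨by simp only [one_div, inv_one]; exact ENNReal.inv_two_add_inv_two⟩)
  rw [hsm] at h
  refine le_trans ?_ h
  calc ENNReal.ofReal |∫ x, u x * f x ∂μ|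
      ≤ ENNReal.ofReal (∫ x, ‖u x * f x‖ ∂μ) := by
        rw [← Real.norm_eq_abs]
        exact ENNReal.ofReal_le_ofReal (norm_integral_le_integral_norm _)
    _ = eLpNorm (fun x => u x * f x) 1 μ := by
        rw [ofReal_integral_norm_eq_lintegral_enorm hi, eLpNorm_one_eq_lintegral_enorm]

lemma aux_condexp_memL2 (hm : m ≤ m0) [IsFiniteMeasure μ] {f : α → ℝ} (hf : MemLp f 2 μ) :
    MemLp (μ[f|m]) 2 μ ∧ eLpNorm (μ[f|m]) 2 μ ≤ eLpNorm f 2 μ := by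
  have hae : ((condExpL2 ℝ ℝ hm (hf.toLp f) : α →₂[μ] ℝ) : α → ℝ) =ᵐ[μ] μ[f|m] := by
    refine ae_eq_condExp_of_forall_setIntegral_eq hm (hf.integrable one_le_two)
      (fun s _ hμs => integrableOn_Lp_of_measure_ne_top _ fact_one_le_two_ennreal.elim hμs.ne)
      (fun s hs hμs => ?_) (lpMeas.aestronglyMeasurable _)
    rw [integral_condExpL2_eq hm (hf.toLp f) hs hμs.ne]
    exact setIntegral_congr_ae (hm s hs) (hf.coeFn_toLp.mono fun x hx _ => hx)
  constructor
  · exact (Lp.memLp _).ae_eq hae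
  · calc eLpNorm (μ[f|m]) 2 μ
        = eLpNorm ((condExpL2 ℝ ℝ hm (hf.toLp f) : α →₂[μ] ℝ) : α → ℝ) 2 μ :=
          (eLpNorm_congr_ae hae).symm
      _ ≤ eLpNorm (hf.toLp f) 2 μ := eLpNorm_condExpL2_le hm _
      _ = eLpNorm f 2 μ := eLpNorm_congr_ae hf.coeFn_toLp

lemma aux_integral_mul_condexp (hm : m ≤ m0) [IsProbabilityMeasure μ] {u f : α → ℝ}
    (hum : StronglyMeasurable[m] u) (hu : MemLp u 2 μ) (hf : MemLp f 2 μ) :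
    ∫ x, u x * f x ∂μ = ∫ x, u x * (μ[f|m]) x ∂μ := by
  have h1 : Integrable (u * f) μ := aux_integrable_mul hu hf
  have h2 := condExp_mul_of_stronglyMeasurable_left hum h1 (hf.integrable one_le_two)
  calc ∫ x, u x * f x ∂μ = ∫ x, (u * f) x ∂μ := rfl
    _ = ∫ x, (μ[u * f|m]) x ∂μ := (integral_condExp hm).symm
    _ = ∫ x, (u * μ[f|m]) x ∂μ := integral_congr_ae h2
    _ = ∫ x, u x * (μ[f|m]) x ∂μ := rfl

end Aux

/-- For any `L²` weight function `w` factoring through `φ`,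
`|Bias(w)| ≤ IPM_{φ(M,P)}((P_X^w)∘φ⁻¹, Q∘φ⁻¹) + ‖Y‖_{L²(P)}·BSE(φ)`. -/
theorem abs_bias_le_ipm_add_norm_mul_bse
    {Ω 𝒳 Z : Type*} [MeasurableSpace Ω] [MeasurableSpace 𝒳] [MeasurableSpace Z]
    (P : Measure Ω) [IsProbabilityMeasure P]
    (X : Ω → 𝒳) (hX : Measurable X)
    (φ : 𝒳 → Z) (hφ : Measurable φ)
    (Q : Measure 𝒳) [IsProbabilityMeasure Q]
    (wstar : 𝒳 → ℝ) (hwstar_meas : Measurable wstar)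
    (hwstar_nn : 0 ≤ᵐ[P.map X] wstar)
    (hQ : Q = (P.map X).withDensity fun x => ENNReal.ofReal (wstar x))
    (hwstarL2 : MemLp (fun ω => wstar (X ω)) 2 P)
    (Y : Ω → ℝ) (hY : MemLp Y 2 P)
    (m : 𝒳 → ℝ) (hm_meas : Measurable m)
    (hm : (fun ω => m (X ω)) =ᵐ[P] P[Y | MeasurableSpace.comap X inferInstance])
    (M : Set (𝒳 → ℝ)) (hmM : m ∈ M)
    (hML2 : ∀ m' ∈ M, MemLp m' 2 (P.map X))
    (mproj : (𝒳 → ℝ) → Z → ℝ)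
    (hproj_meas : ∀ m' ∈ M, Measurable (mproj m'))
    (hproj : ∀ m' ∈ M, (fun ω => mproj m' (φ (X ω))) =ᵐ[P]
      P[(fun ω => m' (X ω)) | MeasurableSpace.comap (fun ω' => φ (X ω')) inferInstance])
    (w : 𝒳 → ℝ) (hw_meas : Measurable w)
    (hw_nn : 0 ≤ᵐ[P.map X] w)
    (hw_int : ∫ x, w x ∂(P.map X) = 1)
    (hwL2 : MemLp w 2 (P.map X))
    (hw_fac : ∃ wbar : Z → ℝ, Measurable wbar ∧ w =ᵐ[P.map X] fun x => wbar (φ x)) :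
    ENNReal.ofReal |(∫ x, w x * m x ∂(P.map X)) - ∫ x, m x ∂Q|
      ≤ ipmE (mproj '' M)
          (Measure.map φ ((P.map X).withDensity fun x => ENNReal.ofReal (w x)))
          (Measure.map φ Q)
        + eLpNorm Y 2 P * bse P (fun ω => wstar (X ω)) (fun ω => φ (X ω)) := by
  classical
  obtain ⟨wbar, hwbar_meas, hwfac⟩ := hw_fac
  have hmZ : MeasurableSpace.comap (fun ω' => φ (X ω')) inferInstance
      ≤ (inferInstance : MeasurableSpace Ω) := measurable_iff_comap_le.mp (hφ.comp hX)
  have hmX : MeasurableSpace.comap X inferInstance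
      ≤ (inferInstance : MeasurableSpace Ω) := measurable_iff_comap_le.mp hX
  set W : Ω → ℝ := fun ω => wstar (X ω) with hWdef
  set f : Ω → ℝ := fun ω => m (X ω) with hfdef
  set h : Ω → ℝ := fun ω => mproj m (φ (X ω)) with hhdef
  set v : Ω → ℝ := fun ω => w (X ω) with hvdef
  set k : Ω → ℝ := fun ω => wbar (φ (X ω)) with hkdef
  set g : Ω → ℝ := P[W|MeasurableSpace.comap (fun ω' => φ (X ω')) inferInstance] with hgdef
  -- L² memberships
  have hv2 : MemLp v 2 P :=
    (memLp_map_measure_iff hw_meas.aestronglyMeasurable hX.aemeasurable).mp hwL2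
  have hvk : v =ᵐ[P] k := ae_of_ae_map hX.aemeasurable hwfac
  have hk2 : MemLp k 2 P := hv2.ae_eq hvk
  have hYc := aux_condexp_memL2 hmX hY
  have hf2 : MemLp f 2 P := hYc.1.ae_eq hm.symm
  have hfnorm : eLpNorm f 2 P ≤ eLpNorm Y 2 P := by
    rw [eLpNorm_congr_ae hm]; exact hYc.2
  have hhproj : h =ᵐ[P] P[f|MeasurableSpace.comap (fun ω' => φ (X ω')) inferInstance] := hproj m hmM
  have hfc := aux_condexp_memL2 hmZ hf2
  have hh2 : MemLp h 2 P := hfc.1.ae_eq hhproj.symm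
  have hW2 : MemLp W 2 P := hwstarL2
  have hWc := aux_condexp_memL2 hmZ hW2
  have hg2 : MemLp g 2 P := hWc.1
  -- measurability w.r.t. mZ
  have hφXm : Measurable[MeasurableSpace.comap (fun ω' => φ (X ω')) inferInstance] (fun ω => φ (X ω)) := measurable_iff_comap_le.mpr le_rfl
  have hkm : StronglyMeasurable[MeasurableSpace.comap (fun ω' => φ (X ω')) inferInstance] k := (hwbar_meas.comp hφXm).stronglyMeasurable
  have hhm : StronglyMeasurable[MeasurableSpace.comap (fun ω' => φ (X ω')) inferInstance] h := ((hproj_meas m hmM).comp hφXm).stronglyMeasurable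
  have hgm : StronglyMeasurable[MeasurableSpace.comap (fun ω' => φ (X ω')) inferInstance] g := stronglyMeasurable_condExp
  -- withDensity integral identities
  have hwd : ∀ (u : 𝒳 → ℝ) (q : 𝒳 → ℝ), Measurable u → (0 ≤ᵐ[P.map X] q) → Measurable q →
      (∫ x, u x ∂((P.map X).withDensity fun x => ENNReal.ofReal (q x)))
        = ∫ x, q x * u x ∂(P.map X) := by
    intro u q hu hqnn hq
    have h1 : (fun x => ENNReal.ofReal (q x))
        = fun x => (((q x).toNNReal : NNReal) : ℝ≥0∞) := rfl
    rw [h1, integral_withDensity_eq_integral_smul (f := fun x => (q x).toNNReal)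
      (measurable_real_toNNReal.comp hq) u]
    refine integral_congr_ae (hqnn.mono fun x hx => ?_)
    simp [NNReal.smul_def, Real.coe_toNNReal _ hx]
  -- key integral identities on Ω
  have hA : (∫ x, w x * m x ∂(P.map X)) = ∫ ω, v ω * f ω ∂P :=
    integral_map hX.aemeasurable (hw_meas.mul hm_meas).aestronglyMeasurable
  have hB : (∫ x, m x ∂Q) = ∫ ω, W ω * f ω ∂P := by
    rw [hQ, hwd m wstar hm_meas hwstar_nn hwstar_meas]
    exact integral_map hX.aemeasurable (hwstar_meas.mul hm_meas).aestronglyMeasurable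
  have hC : (∫ z, mproj m z ∂(Measure.map φ ((P.map X).withDensity
        fun x => ENNReal.ofReal (w x)))) = ∫ ω, v ω * h ω ∂P := by
    rw [integral_map hφ.aemeasurable (hproj_meas m hmM).aestronglyMeasurable,
      hwd (fun x => mproj m (φ x)) w ((hproj_meas m hmM).comp hφ) hw_nn hw_meas]
    exact integral_map hX.aemeasurable
      (hw_meas.mul ((hproj_meas m hmM).comp hφ)).aestronglyMeasurable
  have hD : (∫ z, mproj m z ∂(Measure.map φ Q)) = ∫ ω, W ω * h ω ∂P := by
    rw [integral_map hφ.aemeasurable (hproj_meas m hmM).aestronglyMeasurable, hQ,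
      hwd (fun x => mproj m (φ x)) wstar ((hproj_meas m hmM).comp hφ) hwstar_nn hwstar_meas]
    exact integral_map hX.aemeasurable
      (hwstar_meas.mul ((hproj_meas m hmM).comp hφ)).aestronglyMeasurable
  -- A = C :  ∫ v f = ∫ v h
  have hAC : (∫ ω, v ω * f ω ∂P) = ∫ ω, v ω * h ω ∂P := by
    have e1 : (∫ ω, v ω * f ω ∂P) = ∫ ω, k ω * f ω ∂P :=
      integral_congr_ae (hvk.mono fun ω hω => by simp only [hω])
    have e2 : (∫ ω, k ω * f ω ∂P) = ∫ ω, k ω * (P[f|MeasurableSpace.comap (fun ω' => φ (X ω')) inferInstance]) ω ∂P :=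
      aux_integral_mul_condexp hmZ hkm hk2 hf2
    have e3 : (∫ ω, k ω * (P[f|MeasurableSpace.comap (fun ω' => φ (X ω')) inferInstance]) ω ∂P) = ∫ ω, k ω * h ω ∂P :=
      integral_congr_ae (hhproj.mono fun ω hω => by simp only [hω])
    have e4 : (∫ ω, k ω * h ω ∂P) = ∫ ω, v ω * h ω ∂P :=
      integral_congr_ae (hvk.mono fun ω hω => by simp only [hω])
    rw [e1, e2, e3, e4]
  -- ∫ g f = ∫ W h
  have hgf : (∫ ω, g ω * f ω ∂P) = ∫ ω, W ω * h ω ∂P := by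
    have e1 : (∫ ω, g ω * f ω ∂P) = ∫ ω, g ω * (P[f|MeasurableSpace.comap (fun ω' => φ (X ω')) inferInstance]) ω ∂P :=
      aux_integral_mul_condexp hmZ hgm hg2 hf2
    have e2 : (∫ ω, g ω * (P[f|MeasurableSpace.comap (fun ω' => φ (X ω')) inferInstance]) ω ∂P) = ∫ ω, g ω * h ω ∂P :=
      integral_congr_ae (hhproj.mono fun ω hω => by simp only [hω])
    have e3 : (∫ ω, h ω * W ω ∂P) = ∫ ω, h ω * g ω ∂P :=
      aux_integral_mul_condexp hmZ hhm hh2 hW2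
    have e4 : (∫ ω, g ω * h ω ∂P) = ∫ ω, h ω * g ω ∂P := by
      simp_rw [mul_comm]
    have e5 : (∫ ω, h ω * W ω ∂P) = ∫ ω, W ω * h ω ∂P := by
      simp_rw [mul_comm]
    rw [e1, e2, e4, ← e3, e5]
  -- decomposition of ∫ W f
  have hWf : (∫ ω, W ω * f ω ∂P)
      = (∫ ω, (W ω - g ω) * f ω ∂P) + ∫ ω, W ω * h ω ∂P := by
    have int1 : Integrable (fun ω => (W ω - g ω) * f ω) P :=
      aux_integrable_mul (hW2.sub hg2) hf2
    have int2 : Integrable (fun ω => g ω * f ω) P := aux_integrable_mul hg2 hf2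
    rw [← hgf, ← integral_add int1 int2]
    refine integral_congr_ae (Filter.Eventually.of_forall fun ω => ?_)
    ring
  -- the key algebraic identity
  have key : (∫ x, w x * m x ∂(P.map X)) - ∫ x, m x ∂Q
      = ((∫ z, mproj m z ∂(Measure.map φ ((P.map X).withDensity
            fun x => ENNReal.ofReal (w x)))) - ∫ z, mproj m z ∂(Measure.map φ Q))
        - ∫ ω, (W ω - g ω) * f ω ∂P := by
    rw [hA, hB, hC, hD, hAC, hWf]; ring
  -- bound the two pieces
  have h_ipm : ENNReal.ofReal |(∫ z, mproj m z ∂(Measure.map φ ((P.map X).withDensity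
        fun x => ENNReal.ofReal (w x)))) - ∫ z, mproj m z ∂(Measure.map φ Q)|
      ≤ ipmE (mproj '' M)
          (Measure.map φ ((P.map X).withDensity fun x => ENNReal.ofReal (w x)))
          (Measure.map φ Q) := by
    exact le_iSup₂_of_le (mproj m) (Set.mem_image_of_mem _ hmM) le_rfl
  have h_bse : ENNReal.ofReal |∫ ω, (W ω - g ω) * f ω ∂P|
      ≤ eLpNorm Y 2 P * bse P (fun ω => wstar (X ω)) (fun ω => φ (X ω)) := by
    have e : (∫ ω, (W ω - g ω) * f ω ∂P) = ∫ ω, f ω * (W ω - g ω) ∂P := by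
      simp_rw [mul_comm]
    rw [e]
    refine le_trans
      (aux_ofReal_abs_integral_mul_le (u := f) (f := fun ω => W ω - g ω) hf2 (hW2.sub hg2)) ?_
    exact mul_le_mul' hfnorm (le_of_eq rfl)
  calc ENNReal.ofReal |(∫ x, w x * m x ∂(P.map X)) - ∫ x, m x ∂Q|
      ≤ ENNReal.ofReal (|(∫ z, mproj m z ∂(Measure.map φ ((P.map X).withDensity
            fun x => ENNReal.ofReal (w x)))) - ∫ z, mproj m z ∂(Measure.map φ Q)|
          + |∫ ω, (W ω - g ω) * f ω ∂P|) := by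
        rw [key]; exact ENNReal.ofReal_le_ofReal (abs_sub _ _)
    _ = ENNReal.ofReal |(∫ z, mproj m z ∂(Measure.map φ ((P.map X).withDensity
            fun x => ENNReal.ofReal (w x)))) - ∫ z, mproj m z ∂(Measure.map φ Q)|
          + ENNReal.ofReal |∫ ω, (W ω - g ω) * f ω ∂P| :=
        ENNReal.ofReal_add (abs_nonneg _) (abs_nonneg _)
    _ ≤ _ := add_le_add h_ipm h_bse

end
end

section
/- Let Λ be a measurable space with a probability measure p_Λ, and for each α ∈ Λ let (Ω^α, P^α), X^α, Y^α, Q^α, φ^α, m^α, M^α and w^α satisfy the single-problem assumptions: Q^α ≪ P^α_X with derivative in L²(P^α), Y^α ∈ L²(P^α), m^α(X^α) a version of E[Y^α|σ(X^α)] with m^α ∈ M^α ⊆ L²(P^α_X), and w^α ∈ L²(P^α_X) a weight function w.r.t. P^α equal P^α_X-a.s. to a measurable function of φ^α. Define Bias_α = ∫ w^α·m^α dP^α_X − ∫ m^α dQ^α, IPM_α = IPM_{φ^α(M^α,P^α)}( (P^α_X{}^{w^α})∘(φ^α)⁻¹, Q^α∘(φ^α)⁻¹ ), and BSE_α the balancing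 score error of φ^α for (P^α, Q^α). Assume α ↦ Bias_α², α ↦ IPM_α², and α ↦ BSE_α² are p_Λ-integrable and sup_{α∈Λ} ‖Y^α‖²_{L²(P^α)} < ∞. Then (1/2)·∫ Bias_α² dp_Λ(α) ≤ ∫ IPM_α² dp_Λ(α) + ( sup_{α∈Λ} ‖Y^α‖²_{L²(P^α)} ) · ∫ BSE_α² dp_Λ(α). -/
open MeasureTheory ProbabilityTheory ENNReal

noncomputable section

namespace JointAux
variable {Ω : Type*} {m m0 : MeasurableSpace Ω} {μ : Measure Ω} {f g h : Ω → ℝ}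

lemma inner_toLp (hf : MemLp f 2 μ) (hg : MemLp g 2 μ) :
    (inner ℝ (hf.toLp f) (hg.toLp g) : ℝ) = ∫ ω, f ω * g ω ∂μ := by
  rw [L2.inner_def]
  refine integral_congr_ae ?_
  filter_upwards [hf.coeFn_toLp, hg.coeFn_toLp] with ω h1 h2
  simp [h1, h2, RCLike.inner_apply, mul_comm]

lemma norm_toLp_eq (hf : MemLp f 2 μ) : ‖hf.toLp f‖ = (eLpNorm f 2 μ).toReal := by
  rw [Lp.norm_def, eLpNorm_congr_ae (hf.coeFn_toLp)]

lemma integrable_mul2 (hf : MemLp f 2 μ) (hg : MemLp g 2 μ) :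
    Integrable (fun ω => f ω * g ω) μ := by
  have := L2.integrable_inner (𝕜 := ℝ) (hf.toLp f) (hg.toLp g)
  refine this.congr ?_
  filter_upwards [hf.coeFn_toLp, hg.coeFn_toLp] with ω h1 h2
  simp [h1, h2, RCLike.inner_apply, mul_comm]

lemma abs_integral_mul_le2 (hf : MemLp f 2 μ) (hg : MemLp g 2 μ) :
    |∫ ω, f ω * g ω ∂μ| ≤ (eLpNorm f 2 μ).toReal * (eLpNorm g 2 μ).toReal := by
  rw [← inner_toLp hf hg, ← norm_toLp_eq hf, ← norm_toLp_eq hg]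
  exact abs_real_inner_le_norm _ _

lemma memℒp_two_condexp (hm : m ≤ m0) [IsFiniteMeasure μ] (hf : MemLp f 2 μ) :
    MemLp (μ[f|m]) 2 μ := by
  have hce : (fun ω => ((condExpL2 ℝ ℝ hm (hf.toLp f) : Lp ℝ 2 μ)) ω) =ᵐ[μ] μ[f|m] := by
    refine ae_eq_condExp_of_forall_setIntegral_eq hm (hf.integrable one_le_two)
      (fun s hs hμs => integrableOn_condExpL2_of_measure_ne_top hm hμs.ne _)
      (fun s hs hμs => ?_) (aestronglyMeasurable_condExpL2 hm _)
    rw [integral_condExpL2_eq hm (hf.toLp f) hs hμs.ne]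
    exact setIntegral_congr_ae (hm s hs) (hf.coeFn_toLp.mono fun ω hω _ => hω)
  exact (Lp.memLp ((condExpL2 ℝ ℝ hm (hf.toLp f) : Lp ℝ 2 μ))).ae_eq hce

lemma integral_mul_condexp_eq (hm : m ≤ m0) [IsProbabilityMeasure μ]
    (hh : MemLp h 2 μ) (hhm : AEStronglyMeasurable[m] h μ) (hf : MemLp f 2 μ) :
    ∫ ω, h ω * f ω ∂μ = ∫ ω, h ω * (μ[f|m]) ω ∂μ := by
  have hhf : Integrable (h * f) μ := integrable_mul2 hh hf
  have h1 : ∫ ω, (h * f) ω ∂μ = ∫ ω, (μ[h * f|m]) ω ∂μ := (integral_condExp hm).symm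
  have h2 := condExp_mul_of_aestronglyMeasurable_left hhm hhf (hf.integrable one_le_two)
  calc ∫ ω, h ω * f ω ∂μ = ∫ ω, (μ[h * f|m]) ω ∂μ := h1
    _ = ∫ ω, h ω * (μ[f|m]) ω ∂μ := integral_congr_ae h2

/-- if `∫ g*g = ∫ f*g` then `‖g‖₂ ≤ ‖f‖₂`. -/
lemma eLpNorm_le_of_self_inner (hf : MemLp f 2 μ) (hg : MemLp g 2 μ)
    (hfg : ∫ ω, g ω * g ω ∂μ = ∫ ω, f ω * g ω ∂μ) : eLpNorm g 2 μ ≤ eLpNorm f 2 μ := by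
  have h1 : ‖hg.toLp g‖ ^ 2 = ∫ ω, g ω * g ω ∂μ := by
    rw [← inner_toLp hg hg, real_inner_self_eq_norm_sq]
  have h2 : |∫ ω, f ω * g ω ∂μ| ≤ ‖hf.toLp f‖ * ‖hg.toLp g‖ := by
    rw [← inner_toLp hf hg]; exact abs_real_inner_le_norm _ _
  have h3 : ‖hg.toLp g‖ ≤ ‖hf.toLp f‖ := by
    nlinarith [norm_nonneg (hg.toLp g), norm_nonneg (hf.toLp f), le_abs_self (∫ ω, f ω * g ω ∂μ)]
  rw [norm_toLp_eq hf, norm_toLp_eq hg] at h3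
  exact (ENNReal.toReal_le_toReal hg.eLpNorm_ne_top hf.eLpNorm_ne_top).mp h3

lemma eLpNorm_condexp_le2 (hm : m ≤ m0) [IsProbabilityMeasure μ] (hf : MemLp f 2 μ) :
    eLpNorm (μ[f|m]) 2 μ ≤ eLpNorm f 2 μ := by
  have hc : MemLp (μ[f|m]) 2 μ := memℒp_two_condexp hm hf
  refine eLpNorm_le_of_self_inner hf hc ?_
  calc ∫ ω, (μ[f|m]) ω * (μ[f|m]) ω ∂μ
      = ∫ ω, (μ[f|m]) ω * f ω ∂μ := (integral_mul_condexp_eq hm hc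
        (stronglyMeasurable_condExp.aestronglyMeasurable) hf).symm
    _ = ∫ ω, f ω * (μ[f|m]) ω ∂μ := by simp_rw [mul_comm]

lemma eLpNorm_sub_condexp_le2 (hm : m ≤ m0) [IsProbabilityMeasure μ] (hf : MemLp f 2 μ) :
    eLpNorm (fun ω => f ω - (μ[f|m]) ω) 2 μ ≤ eLpNorm f 2 μ := by
  have hc : MemLp (μ[f|m]) 2 μ := memℒp_two_condexp hm hf
  have hd : MemLp (fun ω => f ω - (μ[f|m]) ω) 2 μ := hf.sub hc
  refine eLpNorm_le_of_self_inner hf hd ?_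
  have horth : ∫ ω, (μ[f|m]) ω * (f ω - (μ[f|m]) ω) ∂μ = 0 := by
    have h1 := integral_mul_condexp_eq hm hc
      (stronglyMeasurable_condExp.aestronglyMeasurable) hf
    have h2 : ∫ ω, (μ[f|m]) ω * (f ω - (μ[f|m]) ω) ∂μ
        = (∫ ω, (μ[f|m]) ω * f ω ∂μ) - ∫ ω, (μ[f|m]) ω * (μ[f|m]) ω ∂μ := by
      simp_rw [mul_sub]
      exact integral_sub (integrable_mul2 hc hf) (integrable_mul2 hc hc)
    rw [h2, h1, sub_self]
  have h2 : ∫ ω, (f ω - (μ[f|m]) ω) * (f ω - (μ[f|m]) ω) ∂μ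
      = (∫ ω, f ω * (f ω - (μ[f|m]) ω) ∂μ)
        - ∫ ω, (μ[f|m]) ω * (f ω - (μ[f|m]) ω) ∂μ := by
    simp_rw [sub_mul]
    exact integral_sub (integrable_mul2 hf hd) (integrable_mul2 hc hd)
  rw [h2, horth, sub_zero]

/-- orthogonality: `∫ h·f = ∫ h·(f - E[f|m])` vanishing form -/
lemma integral_mul_sub_condexp_eq_zero (hm : m ≤ m0) [IsProbabilityMeasure μ]
    (hh : MemLp h 2 μ) (hhm : AEStronglyMeasurable[m] h μ) (hf : MemLp f 2 μ) :
    ∫ ω, h ω * (f ω - (μ[f|m]) ω) ∂μ = 0 := by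
  have hc : MemLp (μ[f|m]) 2 μ := memℒp_two_condexp hm hf
  have h2 : ∫ ω, h ω * (f ω - (μ[f|m]) ω) ∂μ
      = (∫ ω, h ω * f ω ∂μ) - ∫ ω, h ω * (μ[f|m]) ω ∂μ := by
    simp_rw [mul_sub]
    exact integral_sub (integrable_mul2 hh hf) (integrable_mul2 hh hc)
  rw [h2, integral_mul_condexp_eq hm hh hhm hf, sub_self]

end JointAux

set_option maxHeartbeats 1000000 in
lemma single_bound
    {Ω 𝒳 Z : Type*} [MeasurableSpace Ω] [MeasurableSpace 𝒳] [MeasurableSpace Z]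
    (P : Measure Ω) [IsProbabilityMeasure P]
    (X : Ω → 𝒳) (hX : Measurable X)
    (φ : 𝒳 → Z) (hφ : Measurable φ)
    (Y : Ω → ℝ) (hY : MemLp Y 2 P)
    (Q : Measure 𝒳)
    (wstar : 𝒳 → ℝ) (hwstar_meas : Measurable wstar)
    (hwstar_nn : 0 ≤ᵐ[P.map X] wstar)
    (hQ : Q = (P.map X).withDensity fun x => ENNReal.ofReal (wstar x))
    (hwstarL2 : MemLp (fun ω => wstar (X ω)) 2 P)
    (m : 𝒳 → ℝ) (hm_meas : Measurable m)
    (hm : (fun ω => m (X ω)) =ᵐ[P]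
      P[Y | MeasurableSpace.comap X inferInstance])
    (hML2 : MemLp m 2 (P.map X))
    (G : Set (Z → ℝ)) (g : Z → ℝ) (hgG : g ∈ G) (hg_meas : Measurable g)
    (hproj : (fun ω => g (φ (X ω))) =ᵐ[P]
      P[(fun ω => m (X ω)) | MeasurableSpace.comap (fun ω' => φ (X ω')) inferInstance])
    (w : 𝒳 → ℝ) (hw_meas : Measurable w)
    (hw_nn : 0 ≤ᵐ[P.map X] w)
    (hwL2 : MemLp w 2 (P.map X))
    (hw_fac : ∃ wbar : Z → ℝ, Measurable wbar ∧
      w =ᵐ[P.map X] fun x => wbar (φ x)) :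
    ENNReal.ofReal (((∫ x, w x * m x ∂(P.map X)) - ∫ x, m x ∂Q) ^ 2)
      ≤ 2 * (ipmE G
            (Measure.map φ (((P.map X)).withDensity fun x => ENNReal.ofReal (w x)))
            (Measure.map φ Q)) ^ 2
        + 2 * eLpNorm Y 2 P ^ 2 * (bse P (fun ω => wstar (X ω)) (fun ω => φ (X ω))) ^ 2 := by
  classical
  have hσφ : MeasurableSpace.comap (fun ω' => φ (X ω')) inferInstance
      ≤ ‹MeasurableSpace Ω› := (hφ.comp hX).comap_le
  have hσX : MeasurableSpace.comap X inferInstance ≤ ‹MeasurableSpace Ω› := hX.comap_le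
  -- functions on Ω
  set W : Ω → ℝ := fun ω => w (X ω) with hWdef
  set Wst : Ω → ℝ := fun ω => wstar (X ω) with hWstdef
  set Mf : Ω → ℝ := fun ω => m (X ω) with hMfdef
  set Gf : Ω → ℝ := fun ω => g (φ (X ω)) with hGfdef
  -- MemLp facts
  have hW2 : MemLp W 2 P :=
    (memLp_map_measure_iff hw_meas.aestronglyMeasurable hX.aemeasurable).mp hwL2
  have hMf2 : MemLp Mf 2 P :=
    (memLp_map_measure_iff hm_meas.aestronglyMeasurable hX.aemeasurable).mp hML2
  have hCE2 : MemLp (P[Mf|MeasurableSpace.comap (fun ω' => φ (X ω')) inferInstance]) 2 P := JointAux.memℒp_two_condexp hσφ hMf2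
  have hGf2 : MemLp Gf 2 P := hCE2.ae_eq hproj.symm
  -- step 1 : bias as integrals over Ω
  have hstep1 : ∫ x, w x * m x ∂(P.map X) = ∫ ω, W ω * Mf ω ∂P :=
    integral_map hX.aemeasurable (hw_meas.mul hm_meas).aestronglyMeasurable
  -- generic withDensity computation
  have hwd : ∀ (v : 𝒳 → ℝ), Measurable v → (0 ≤ᵐ[P.map X] v) → ∀ (u : 𝒳 → ℝ), Measurable u →
      ∫ x, u x ∂((P.map X).withDensity fun x => ENNReal.ofReal (v x))
        = ∫ x, v x * u x ∂(P.map X) := by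
    intro v hv hvnn u hu
    have h1 : ∫ x, u x ∂((P.map X).withDensity fun x => ENNReal.ofReal (v x))
        = ∫ x, ((v x).toNNReal : NNReal) • u x ∂(P.map X) := by
      have : (fun x => ENNReal.ofReal (v x)) = fun x => ((v x).toNNReal : ℝ≥0∞) := rfl
      rw [this]
      exact integral_withDensity_eq_integral_smul hv.real_toNNReal u
    rw [h1]
    refine integral_congr_ae ?_
    filter_upwards [hvnn] with x hx
    simp [NNReal.smul_def, Real.coe_toNNReal _ hx]
  have hstep2 : ∫ x, m x ∂Q = ∫ ω, Wst ω * Mf ω ∂P := by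
    rw [hQ, hwd wstar hwstar_meas hwstar_nn m hm_meas]
    exact integral_map hX.aemeasurable (hwstar_meas.mul hm_meas).aestronglyMeasurable
  -- the two φ-pushforward integrals of g
  have hstep3 : ∫ x, g x ∂(Measure.map φ ((P.map X).withDensity fun x => ENNReal.ofReal (w x)))
      = ∫ ω, W ω * Gf ω ∂P := by
    rw [integral_map hφ.aemeasurable hg_meas.aestronglyMeasurable,
      hwd w hw_meas hw_nn (fun x => g (φ x)) (hg_meas.comp hφ)]
    exact integral_map hX.aemeasurable
      (hw_meas.mul (hg_meas.comp hφ)).aestronglyMeasurable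
  have hstep4 : ∫ x, g x ∂(Measure.map φ Q) = ∫ ω, Wst ω * Gf ω ∂P := by
    rw [hQ, integral_map hφ.aemeasurable hg_meas.aestronglyMeasurable,
      hwd wstar hwstar_meas hwstar_nn (fun x => g (φ x)) (hg_meas.comp hφ)]
    exact integral_map hX.aemeasurable
      (hwstar_meas.mul (hg_meas.comp hφ)).aestronglyMeasurable
  -- Claim A : ∫ W·Mf = ∫ W·Gf
  obtain ⟨wbar, hwbar_meas, hwbar⟩ := hw_fac
  have hWW' : W =ᵐ[P] fun ω => wbar (φ (X ω)) := ae_of_ae_map hX.aemeasurable hwbar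
  have hφXσ : Measurable[MeasurableSpace.comap (fun ω' => φ (X ω')) inferInstance] (fun ω' => φ (X ω')) := Measurable.of_comap_le le_rfl
  have hW'm : AEStronglyMeasurable[MeasurableSpace.comap (fun ω' => φ (X ω')) inferInstance] (fun ω => wbar (φ (X ω))) P :=
    ((hwbar_meas.comp hφXσ).stronglyMeasurable).aestronglyMeasurable
  have hW'2 : MemLp (fun ω => wbar (φ (X ω))) 2 P := hW2.ae_eq hWW'
  have hclaimA : ∫ ω, W ω * Mf ω ∂P = ∫ ω, W ω * Gf ω ∂P := by
    calc ∫ ω, W ω * Mf ω ∂P = ∫ ω, wbar (φ (X ω)) * Mf ω ∂P :=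
          integral_congr_ae (hWW'.mul Filter.EventuallyEq.rfl)
      _ = ∫ ω, wbar (φ (X ω)) * (P[Mf|MeasurableSpace.comap (fun ω' => φ (X ω')) inferInstance]) ω ∂P :=
          JointAux.integral_mul_condexp_eq hσφ hW'2 hW'm hMf2
      _ = ∫ ω, wbar (φ (X ω)) * Gf ω ∂P :=
          integral_congr_ae (Filter.EventuallyEq.mul Filter.EventuallyEq.rfl hproj.symm)
      _ = ∫ ω, W ω * Gf ω ∂P :=
          integral_congr_ae (hWW'.symm.mul Filter.EventuallyEq.rfl)
  -- Claim B
  set C : Ω → ℝ := P[Wst|MeasurableSpace.comap (fun ω' => φ (X ω')) inferInstance] with hCdef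
  have hC2 : MemLp C 2 P := JointAux.memℒp_two_condexp hσφ hwstarL2
  have hD2 : MemLp (fun ω => Wst ω - C ω) 2 P := hwstarL2.sub hC2
  have hMG2 : MemLp (fun ω => Mf ω - Gf ω) 2 P := hMf2.sub hGf2
  have hCzero : ∫ ω, C ω * (Mf ω - Gf ω) ∂P = 0 := by
    have h0 : ∫ ω, C ω * (Mf ω - (P[Mf|MeasurableSpace.comap (fun ω' => φ (X ω')) inferInstance]) ω) ∂P = 0 :=
      JointAux.integral_mul_sub_condexp_eq_zero hσφ hC2
        (stronglyMeasurable_condExp.aestronglyMeasurable) hMf2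
    rw [← h0]
    refine integral_congr_ae ?_
    filter_upwards [hproj] with ω hω
    rw [hω]
  have hclaimB : ∫ ω, Wst ω * Mf ω ∂P - ∫ ω, Wst ω * Gf ω ∂P
      = ∫ ω, (Wst ω - C ω) * (Mf ω - Gf ω) ∂P := by
    have h1 : ∫ ω, (Wst ω - C ω) * (Mf ω - Gf ω) ∂P
        = (∫ ω, Wst ω * (Mf ω - Gf ω) ∂P) - ∫ ω, C ω * (Mf ω - Gf ω) ∂P := by
      simp_rw [sub_mul]
      exact integral_sub (JointAux.integrable_mul2 hwstarL2 hMG2)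
        (JointAux.integrable_mul2 hC2 hMG2)
    have h2 : ∫ ω, Wst ω * (Mf ω - Gf ω) ∂P
        = (∫ ω, Wst ω * Mf ω ∂P) - ∫ ω, Wst ω * Gf ω ∂P := by
      simp_rw [mul_sub]
      exact integral_sub (JointAux.integrable_mul2 hwstarL2 hMf2)
        (JointAux.integrable_mul2 hwstarL2 hGf2)
    rw [h1, hCzero, sub_zero, h2]
  -- eLpNorm (Mf - Gf) ≤ eLpNorm Y
  have hMGY : eLpNorm (fun ω => Mf ω - Gf ω) 2 P ≤ eLpNorm Y 2 P := by
    have hYX : MemLp (P[Y|MeasurableSpace.comap X inferInstance]) 2 P := JointAux.memℒp_two_condexp hσX hY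
    have hae : (fun ω => Mf ω - Gf ω) =ᵐ[P]
        fun ω => (P[Y|MeasurableSpace.comap X inferInstance]) ω - (P[(P[Y|MeasurableSpace.comap X inferInstance])|MeasurableSpace.comap (fun ω' => φ (X ω')) inferInstance]) ω := by
      have hG' : Gf =ᵐ[P] P[(P[Y|MeasurableSpace.comap X inferInstance])|MeasurableSpace.comap (fun ω' => φ (X ω')) inferInstance] := hproj.trans (condExp_congr_ae hm)
      filter_upwards [hm, hG'] with ω h1 h2
      rw [h1, h2]
    calc eLpNorm (fun ω => Mf ω - Gf ω) 2 P
        = eLpNorm (fun ω => (P[Y|MeasurableSpace.comap X inferInstance]) ω - (P[(P[Y|MeasurableSpace.comap X inferInstance])|MeasurableSpace.comap (fun ω' => φ (X ω')) inferInstance]) ω) 2 P := eLpNorm_congr_ae hae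
      _ ≤ eLpNorm (P[Y|MeasurableSpace.comap X inferInstance]) 2 P := JointAux.eLpNorm_sub_condexp_le2 hσφ hYX
      _ ≤ eLpNorm Y 2 P := JointAux.eLpNorm_condexp_le2 hσX hY
  -- real-number bound
  set J : ℝ := (∫ ω, W ω * Gf ω ∂P) - ∫ ω, Wst ω * Gf ω ∂P with hJdef
  set R : ℝ := ∫ ω, (Wst ω - C ω) * (Mf ω - Gf ω) ∂P with hRdef
  set bR : ℝ := (eLpNorm (fun ω => Wst ω - C ω) 2 P).toReal with hbRdef
  set yR : ℝ := (eLpNorm Y 2 P).toReal with hyRdef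
  have hbias_eq : (∫ x, w x * m x ∂(P.map X)) - ∫ x, m x ∂Q = J - R := by
    have e1 : R = (∫ ω, Wst ω * Mf ω ∂P) - ∫ ω, Wst ω * Gf ω ∂P := hclaimB.symm
    rw [hstep1, hstep2, e1, hJdef, hclaimA]; ring
  have hRle : |R| ≤ bR * yR := by
    calc |R| ≤ (eLpNorm (fun ω => Wst ω - C ω) 2 P).toReal
          * (eLpNorm (fun ω => Mf ω - Gf ω) 2 P).toReal :=
          JointAux.abs_integral_mul_le2 hD2 hMG2
      _ ≤ bR * yR := by
          refine mul_le_mul_of_nonneg_left ?_ ENNReal.toReal_nonneg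
          exact ENNReal.toReal_mono hY.eLpNorm_ne_top hMGY
  have hbias_sq : ((∫ x, w x * m x ∂(P.map X)) - ∫ x, m x ∂Q) ^ 2
      ≤ 2 * J ^ 2 + 2 * (bR * yR) ^ 2 := by
    rw [hbias_eq]
    have h1 : |J - R| ≤ |J| + bR * yR := (abs_sub J R).trans (by gcongr)
    have h2 : |J - R| * |J - R| ≤ (|J| + bR * yR) * (|J| + bR * yR) :=
      mul_self_le_mul_self (abs_nonneg _) h1
    nlinarith [h2, sq_nonneg (|J| - bR * yR), sq_abs (J - R), sq_abs J]
  -- pass to ℝ≥0∞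
  have hJipm : ENNReal.ofReal |J| ≤ ipmE G
      (Measure.map φ ((P.map X).withDensity fun x => ENNReal.ofReal (w x)))
      (Measure.map φ Q) := by
    have : |J| = |(∫ x, g x ∂(Measure.map φ ((P.map X).withDensity
        fun x => ENNReal.ofReal (w x)))) - ∫ x, g x ∂(Measure.map φ Q)| := by
      rw [hstep3, hstep4]
    rw [this]
    unfold ipmE
    exact le_biSup (f := fun g : Z → ℝ => ENNReal.ofReal
      |(∫ x, g x ∂(Measure.map φ ((P.map X).withDensity fun x => ENNReal.ofReal (w x))))
        - ∫ x, g x ∂(Measure.map φ Q)|) hgG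
  have hbse_eq : ENNReal.ofReal bR
      = bse P (fun ω => wstar (X ω)) (fun ω => φ (X ω)) := by
    rw [hbRdef, ENNReal.ofReal_toReal hD2.eLpNorm_ne_top]
    rfl
  have hy_eq : ENNReal.ofReal yR = eLpNorm Y 2 P := by
    rw [hyRdef, ENNReal.ofReal_toReal hY.eLpNorm_ne_top]
  calc ENNReal.ofReal (((∫ x, w x * m x ∂(P.map X)) - ∫ x, m x ∂Q) ^ 2)
      ≤ ENNReal.ofReal (2 * J ^ 2 + 2 * (bR * yR) ^ 2) := ENNReal.ofReal_le_ofReal hbias_sq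
    _ = 2 * (ENNReal.ofReal |J|) ^ 2 + 2 * (ENNReal.ofReal yR) ^ 2
          * (ENNReal.ofReal bR) ^ 2 := by
        rw [ENNReal.ofReal_add (by positivity) (by positivity),
          ENNReal.ofReal_mul (by norm_num : (0:ℝ) ≤ 2),
          ENNReal.ofReal_mul (by norm_num : (0:ℝ) ≤ 2)]
        rw [show ((bR * yR) ^ 2 : ℝ) = yR ^ 2 * bR ^ 2 by ring]
        rw [ENNReal.ofReal_mul (by positivity),
          ENNReal.ofReal_pow ENNReal.toReal_nonneg, ENNReal.ofReal_pow ENNReal.toReal_nonneg,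
          ← sq_abs J, ENNReal.ofReal_pow (abs_nonneg J)]
        norm_num [mul_assoc]
        rfl
    _ = 2 * (ENNReal.ofReal |J|) ^ 2
        + 2 * eLpNorm Y 2 P ^ 2 * (bse P (fun ω => wstar (X ω)) (fun ω => φ (X ω))) ^ 2 := by
        rw [hbse_eq, hy_eq]
    _ ≤ 2 * (ipmE G (Measure.map φ ((P.map X).withDensity fun x => ENNReal.ofReal (w x)))
          (Measure.map φ Q)) ^ 2
        + 2 * eLpNorm Y 2 P ^ 2 * (bse P (fun ω => wstar (X ω)) (fun ω => φ (X ω))) ^ 2 := by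
        gcongr


/-- Simultaneous weighting problems indexed by `α ∈ Λ` with distribution `p_Λ`:
`(1/2)·∫ Bias_α² dp_Λ ≤ ∫ IPM_α² dp_Λ + (sup_α ‖Y^α‖²_{L²(P^α)}) · ∫ BSE_α² dp_Λ`. -/
theorem joint_sq_bias_le_joint_sq_ipm_add_sup_mul_joint_sq_bse
    {Λ : Type*} [MeasurableSpace Λ] (pΛ : Measure Λ) [IsProbabilityMeasure pΛ]
    {Ω : Λ → Type*} [∀ α, MeasurableSpace (Ω α)]
    {𝒳 : Λ → Type*} [∀ α, MeasurableSpace (𝒳 α)]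
    {Z : Λ → Type*} [∀ α, MeasurableSpace (Z α)]
    (P : ∀ α, Measure (Ω α)) [∀ α, IsProbabilityMeasure (P α)]
    (X : ∀ α, Ω α → 𝒳 α) (hX : ∀ α, Measurable (X α))
    (φ : ∀ α, 𝒳 α → Z α) (hφ : ∀ α, Measurable (φ α))
    (Y : ∀ α, Ω α → ℝ) (hY : ∀ α, MemLp (Y α) 2 (P α))
    (Q : ∀ α, Measure (𝒳 α)) [∀ α, IsProbabilityMeasure (Q α)]
    (wstar : ∀ α, 𝒳 α → ℝ) (hwstar_meas : ∀ α, Measurable (wstar α))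
    (hwstar_nn : ∀ α, 0 ≤ᵐ[(P α).map (X α)] wstar α)
    (hQ : ∀ α, Q α = ((P α).map (X α)).withDensity fun x => ENNReal.ofReal (wstar α x))
    (hwstarL2 : ∀ α, MemLp (fun ω => wstar α (X α ω)) 2 (P α))
    (m : ∀ α, 𝒳 α → ℝ) (hm_meas : ∀ α, Measurable (m α))
    (hm : ∀ α, (fun ω => m α (X α ω)) =ᵐ[P α]
      (P α)[Y α | MeasurableSpace.comap (X α) inferInstance])
    (M : ∀ α, Set (𝒳 α → ℝ)) (hmM : ∀ α, m α ∈ M α)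
    (hML2 : ∀ α, ∀ m' ∈ M α, MemLp m' 2 ((P α).map (X α)))
    (mproj : ∀ α, (𝒳 α → ℝ) → Z α → ℝ)
    (hproj_meas : ∀ α, ∀ m' ∈ M α, Measurable (mproj α m'))
    (hproj : ∀ α, ∀ m' ∈ M α, (fun ω => mproj α m' (φ α (X α ω))) =ᵐ[P α]
      (P α)[(fun ω => m' (X α ω)) |
        MeasurableSpace.comap (fun ω' => φ α (X α ω')) inferInstance])
    (w : ∀ α, 𝒳 α → ℝ) (hw_meas : ∀ α, Measurable (w α))
    (hw_nn : ∀ α, 0 ≤ᵐ[(P α).map (X α)] w α)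
    (hw_int : ∀ α, ∫ x, w α x ∂((P α).map (X α)) = 1)
    (hwL2 : ∀ α, MemLp (w α) 2 ((P α).map (X α)))
    (hw_fac : ∀ α, ∃ wbar : Z α → ℝ, Measurable wbar ∧
      w α =ᵐ[(P α).map (X α)] fun x => wbar (φ α x))
    -- integrability over Λ of the squared bias, squared IPM and squared BSE
    (hBias_meas : AEMeasurable (fun α =>
      ENNReal.ofReal (((∫ x, w α x * m α x ∂((P α).map (X α))) - ∫ x, m α x ∂(Q α)) ^ 2)) pΛ)
    (hBias_int : (∫⁻ α,
      ENNReal.ofReal (((∫ x, w α x * m α x ∂((P α).map (X α))) - ∫ x, m α x ∂(Q α)) ^ 2) ∂pΛ) ≠ ⊤)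
    (hIPM_meas : AEMeasurable (fun α =>
      (ipmE (mproj α '' M α)
        (Measure.map (φ α) (((P α).map (X α)).withDensity fun x => ENNReal.ofReal (w α x)))
        (Measure.map (φ α) (Q α))) ^ 2) pΛ)
    (hIPM_int : (∫⁻ α,
      (ipmE (mproj α '' M α)
        (Measure.map (φ α) (((P α).map (X α)).withDensity fun x => ENNReal.ofReal (w α x)))
        (Measure.map (φ α) (Q α))) ^ 2 ∂pΛ) ≠ ⊤)
    (hBSE_meas : AEMeasurable (fun α =>
      (bse (P α) (fun ω => wstar α (X α ω)) (fun ω => φ α (X α ω))) ^ 2) pΛ)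
    (hBSE_int : (∫⁻ α,
      (bse (P α) (fun ω => wstar α (X α ω)) (fun ω => φ α (X α ω))) ^ 2 ∂pΛ) ≠ ⊤)
    (hYsup : (⨆ α, eLpNorm (Y α) 2 (P α) ^ 2) ≠ ⊤) :
    (∫⁻ α, ENNReal.ofReal
        (((∫ x, w α x * m α x ∂((P α).map (X α))) - ∫ x, m α x ∂(Q α)) ^ 2) ∂pΛ) / 2
      ≤ (∫⁻ α,
          (ipmE (mproj α '' M α)
            (Measure.map (φ α) (((P α).map (X α)).withDensity fun x => ENNReal.ofReal (w α x)))
            (Measure.map (φ α) (Q α))) ^ 2 ∂pΛ)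
        + (⨆ α, eLpNorm (Y α) 2 (P α) ^ 2) *
          ∫⁻ α, (bse (P α) (fun ω => wstar α (X α ω)) (fun ω => φ α (X α ω))) ^ 2 ∂pΛ := by
  classical
  have hpt : ∀ α, ENNReal.ofReal
        (((∫ x, w α x * m α x ∂((P α).map (X α))) - ∫ x, m α x ∂(Q α)) ^ 2)
      ≤ 2 * (ipmE (mproj α '' M α)
            (Measure.map (φ α) (((P α).map (X α)).withDensity fun x => ENNReal.ofReal (w α x)))
            (Measure.map (φ α) (Q α))) ^ 2
        + 2 * (⨆ α', eLpNorm (Y α') 2 (P α') ^ 2) *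
            (bse (P α) (fun ω => wstar α (X α ω)) (fun ω => φ α (X α ω))) ^ 2 := by
    intro α
    calc ENNReal.ofReal (((∫ x, w α x * m α x ∂((P α).map (X α))) - ∫ x, m α x ∂(Q α)) ^ 2)
        ≤ 2 * (ipmE (mproj α '' M α)
            (Measure.map (φ α) (((P α).map (X α)).withDensity fun x => ENNReal.ofReal (w α x)))
            (Measure.map (φ α) (Q α))) ^ 2
          + 2 * eLpNorm (Y α) 2 (P α) ^ 2 *
            (bse (P α) (fun ω => wstar α (X α ω)) (fun ω => φ α (X α ω))) ^ 2 :=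
          single_bound (P α) (X α) (hX α) (φ α) (hφ α) (Y α) (hY α) (Q α)
            (wstar α) (hwstar_meas α) (hwstar_nn α) (hQ α) (hwstarL2 α)
            (m α) (hm_meas α) (hm α) (hML2 α (m α) (hmM α))
            (mproj α '' M α) (mproj α (m α)) (Set.mem_image_of_mem _ (hmM α))
            (hproj_meas α (m α) (hmM α)) (hproj α (m α) (hmM α))
            (w α) (hw_meas α) (hw_nn α) (hwL2 α) (hw_fac α)
      _ ≤ 2 * (ipmE (mproj α '' M α)
            (Measure.map (φ α) (((P α).map (X α)).withDensity fun x => ENNReal.ofReal (w α x)))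
            (Measure.map (φ α) (Q α))) ^ 2
          + 2 * (⨆ α', eLpNorm (Y α') 2 (P α') ^ 2) *
            (bse (P α) (fun ω => wstar α (X α ω)) (fun ω => φ α (X α ω))) ^ 2 := by
          gcongr
          exact le_iSup (fun α' => eLpNorm (Y α') 2 (P α') ^ 2) α
  have h1 : (∫⁻ α, ENNReal.ofReal
        (((∫ x, w α x * m α x ∂((P α).map (X α))) - ∫ x, m α x ∂(Q α)) ^ 2) ∂pΛ)
      ≤ ∫⁻ α, (2 * (ipmE (mproj α '' M α)
            (Measure.map (φ α) (((P α).map (X α)).withDensity fun x => ENNReal.ofReal (w α x)))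
            (Measure.map (φ α) (Q α))) ^ 2
          + 2 * (⨆ α', eLpNorm (Y α') 2 (P α') ^ 2) *
            (bse (P α) (fun ω => wstar α (X α ω)) (fun ω => φ α (X α ω))) ^ 2) ∂pΛ :=
    lintegral_mono hpt
  have h2 : (∫⁻ α, (2 * (ipmE (mproj α '' M α)
            (Measure.map (φ α) (((P α).map (X α)).withDensity fun x => ENNReal.ofReal (w α x)))
            (Measure.map (φ α) (Q α))) ^ 2
          + 2 * (⨆ α', eLpNorm (Y α') 2 (P α') ^ 2) *
            (bse (P α) (fun ω => wstar α (X α ω)) (fun ω => φ α (X α ω))) ^ 2) ∂pΛ)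
      = 2 * (∫⁻ α, (ipmE (mproj α '' M α)
            (Measure.map (φ α) (((P α).map (X α)).withDensity fun x => ENNReal.ofReal (w α x)))
            (Measure.map (φ α) (Q α))) ^ 2 ∂pΛ)
        + 2 * (⨆ α', eLpNorm (Y α') 2 (P α') ^ 2) *
            ∫⁻ α, (bse (P α) (fun ω => wstar α (X α ω)) (fun ω => φ α (X α ω))) ^ 2 ∂pΛ := by
    rw [lintegral_add_left' (hIPM_meas.const_mul 2), lintegral_const_mul'' 2 hIPM_meas,
      lintegral_const_mul'' _ hBSE_meas]
  rw [h2] at h1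
  have h3 : (∫⁻ α, ENNReal.ofReal
        (((∫ x, w α x * m α x ∂((P α).map (X α))) - ∫ x, m α x ∂(Q α)) ^ 2) ∂pΛ)
      ≤ 2 * ((∫⁻ α, (ipmE (mproj α '' M α)
            (Measure.map (φ α) (((P α).map (X α)).withDensity fun x => ENNReal.ofReal (w α x)))
            (Measure.map (φ α) (Q α))) ^ 2 ∂pΛ)
        + (⨆ α', eLpNorm (Y α') 2 (P α') ^ 2) *
            ∫⁻ α, (bse (P α) (fun ω => wstar α (X α ω)) (fun ω => φ α (X α ω))) ^ 2 ∂pΛ) := by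
    rw [mul_add, ← mul_assoc]
    exact h1
  calc (∫⁻ α, ENNReal.ofReal (((∫ x, w α x * m α x ∂((P α).map (X α))) - ∫ x, m α x ∂(Q α)) ^ 2) ∂pΛ) / 2
      ≤ (2 * ((∫⁻ α, (ipmE (mproj α '' M α)
            (Measure.map (φ α) (((P α).map (X α)).withDensity fun x => ENNReal.ofReal (w α x)))
            (Measure.map (φ α) (Q α))) ^ 2 ∂pΛ)
        + (⨆ α, eLpNorm (Y α) 2 (P α) ^ 2) *
            ∫⁻ α, (bse (P α) (fun ω => wstar α (X α ω)) (fun ω => φ α (X α ω))) ^ 2 ∂pΛ)) / 2 :=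
        ENNReal.div_le_div_right h3 2
    _ = _ := by
        rw [show (2:ℝ≥0∞) * _ / 2 = _ * 2 / 2 from by rw [mul_comm],
          mul_div_assoc, ENNReal.div_self (by norm_num) (by norm_num), mul_one]

end
end

section
/- If φ is a balancing score, i.e. w*(X) = E_P[w*(X) | σ(φ∘X)] P-almost surely (equivalently, w* equals a measurable function of φ P_X-almost surely), then the confounding bias of φ is zero: E_Q[m_φ∘φ − m] = 0. -/
open MeasureTheory ProbabilityTheory ENNReal

noncomputable section

/-- If `φ` is a balancing score, i.e. `w*(X) = E_P[w*(X)|σ(φ∘X)]` `P`-a.s., then the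
confounding bias of `φ` is zero: `E_Q[m_φ∘φ − m] = 0`. -/
theorem balancing_score_confounding_bias_eq_zero
    {Ω 𝒳 Z : Type*} [MeasurableSpace Ω] [MeasurableSpace 𝒳] [MeasurableSpace Z]
    (P : Measure Ω) [IsProbabilityMeasure P]
    (X : Ω → 𝒳) (hX : Measurable X)
    (φ : 𝒳 → Z) (hφ : Measurable φ)
    (Q : Measure 𝒳) [IsProbabilityMeasure Q]
    (wstar : 𝒳 → ℝ) (hwstar_meas : Measurable wstar)
    (hwstar_nn : 0 ≤ᵐ[P.map X] wstar)
    (hQ : Q = (P.map X).withDensity fun x => ENNReal.ofReal (wstar x))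
    (hwstarL2 : MemLp (fun ω => wstar (X ω)) 2 P)
    (Y : Ω → ℝ) (hY : MemLp Y 2 P)
    (m : 𝒳 → ℝ) (hm_meas : Measurable m)
    (hm : (fun ω => m (X ω)) =ᵐ[P] P[Y | MeasurableSpace.comap X inferInstance])
    (mφ : Z → ℝ) (hmφ_meas : Measurable mφ)
    (hmφ : (fun ω => mφ (φ (X ω))) =ᵐ[P]
      P[Y | MeasurableSpace.comap (fun ω' => φ (X ω')) inferInstance])
    (hbal : (fun ω => wstar (X ω)) =ᵐ[P]
      P[(fun ω => wstar (X ω)) |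
        MeasurableSpace.comap (fun ω' => φ (X ω')) inferInstance]) :
    ∫ x, (mφ (φ x) - m x) ∂Q = 0 := by
  have hSle : MeasurableSpace.comap X inferInstance ≤ ‹MeasurableSpace Ω› :=
    measurable_iff_comap_le.mp hX
  have hGle : MeasurableSpace.comap (fun ω' => φ (X ω')) inferInstance
      ≤ ‹MeasurableSpace Ω› := measurable_iff_comap_le.mp (hφ.comp hX)
  -- measurability of w∘X w.r.t. comap X
  have hwX_S : StronglyMeasurable[MeasurableSpace.comap X inferInstance]
      (fun ω => wstar (X ω)) := by
    have h : Measurable[MeasurableSpace.comap X inferInstance] (fun ω => wstar (X ω)) :=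
      hwstar_meas.comp (Measurable.of_comap_le le_rfl)
    exact h.stronglyMeasurable
  have hY_int : Integrable Y P := hY.integrable one_le_two
  -- integrability of w(X) * Y
  have hwY_int : Integrable (fun ω => wstar (X ω) * Y ω) P := by
    have h : MemLp ((fun ω => wstar (X ω)) • Y) 1 P :=
      hY.smul hwstarL2 (p := 2) (q := 2) (r := 1)
        (hpqr := ⟨by norm_num [ENNReal.inv_two_add_inv_two]⟩)
    exact h.integrable le_rfl
  set g : Ω → ℝ :=
    P[(fun ω => wstar (X ω)) | MeasurableSpace.comap (fun ω' => φ (X ω')) inferInstance]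
    with hg_def
  have hg_sm : StronglyMeasurable[MeasurableSpace.comap (fun ω' => φ (X ω')) inferInstance]
      g := stronglyMeasurable_condExp
  have hgY_int : Integrable (fun ω => g ω * Y ω) P :=
    hwY_int.congr (by filter_upwards [hbal] with ω h using by rw [h])
  -- pull-out for comap X
  have hA : P[(fun ω => wstar (X ω)) * Y | MeasurableSpace.comap X inferInstance]
      =ᵐ[P] (fun ω => wstar (X ω)) * P[Y | MeasurableSpace.comap X inferInstance] :=
    condExp_mul_of_stronglyMeasurable_left hwX_S (by exact hwY_int) hY_int
  -- pull-out for comap (φ ∘ X)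
  have hB : P[g * Y | MeasurableSpace.comap (fun ω' => φ (X ω')) inferInstance]
      =ᵐ[P] g * P[Y | MeasurableSpace.comap (fun ω' => φ (X ω')) inferInstance] :=
    condExp_mul_of_stronglyMeasurable_left hg_sm (by exact hgY_int) hY_int
  -- the two key integral identities
  have h1 : (fun ω => wstar (X ω) * m (X ω)) =ᵐ[P]
      P[(fun ω => wstar (X ω)) * Y | MeasurableSpace.comap X inferInstance] := by
    filter_upwards [hm, hA] with ω h₁ h₂
    simp only [Pi.mul_apply] at h₂ ⊢
    rw [h₁, ← h₂]
  have key1 : ∫ ω, wstar (X ω) * m (X ω) ∂P = ∫ ω, wstar (X ω) * Y ω ∂P := by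
    rw [integral_congr_ae h1, integral_condExp hSle]
    rfl
  have hInt1 : Integrable (fun ω => wstar (X ω) * m (X ω)) P :=
    integrable_condExp.congr h1.symm
  have h2 : (fun ω => wstar (X ω) * mφ (φ (X ω))) =ᵐ[P]
      P[g * Y | MeasurableSpace.comap (fun ω' => φ (X ω')) inferInstance] := by
    filter_upwards [hmφ, hB, hbal] with ω h₁ h₂ h₃
    simp only [Pi.mul_apply] at h₂ ⊢
    rw [h₁, h₃, ← h₂]
  have key2 : ∫ ω, wstar (X ω) * mφ (φ (X ω)) ∂P = ∫ ω, wstar (X ω) * Y ω ∂P := by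
    rw [integral_congr_ae h2, integral_condExp hGle]
    refine integral_congr_ae ?_
    filter_upwards [hbal] with ω h
    simp only [Pi.mul_apply]
    rw [← h]
  have hInt2 : Integrable (fun ω => wstar (X ω) * mφ (φ (X ω))) P :=
    integrable_condExp.congr h2.symm
  -- rewrite the Q-integral as a P-integral
  have hQint : ∫ x, (mφ (φ x) - m x) ∂Q
      = ∫ ω, wstar (X ω) * (mφ (φ (X ω)) - m (X ω)) ∂P := by
    rw [hQ]
    have hd : (fun x => ENNReal.ofReal (wstar x))
        = fun x => ((wstar x).toNNReal : ℝ≥0∞) := rfl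
    rw [hd, integral_withDensity_eq_integral_smul hwstar_meas.real_toNNReal]
    have h3 : (fun x => (wstar x).toNNReal • (mφ (φ x) - m x))
        =ᵐ[P.map X] fun x => wstar x * (mφ (φ x) - m x) := by
      filter_upwards [hwstar_nn] with x hx
      simp [NNReal.smul_def, Real.coe_toNNReal _ hx]
    rw [integral_congr_ae h3]
    exact integral_map hX.aemeasurable
      ((hwstar_meas.mul ((hmφ_meas.comp hφ).sub hm_meas)).aestronglyMeasurable)
  rw [hQint]
  have hsplit : ∫ ω, wstar (X ω) * (mφ (φ (X ω)) - m (X ω)) ∂P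
      = ∫ ω, (wstar (X ω) * mφ (φ (X ω)) - wstar (X ω) * m (X ω)) ∂P := by
    congr 1; ext ω; ring
  rw [hsplit, integral_sub hInt2 hInt1, key1, key2, sub_self]

end
end
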